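/- arXiv:2202.07527 — 10 statements merged into one kernel-verified Lean document; each statement's English description precedes it below -/
import Mathlib

section
/- Let X be a random variable taking values in [-1,1] with continuous positive density on (-1,1). Fix a positive integer n and suppose -1 ≤ α < β ≤ 1 satisfy p_X(α)^{1/n} ≤ sqrt(1 - m_X(α)^2), and that for every t in (α,β) the inequality (m_X(t) - t) · m_X(t)/(1 - m_X(t)^2) < 1/n holds. Then for every t in (α,β), p_X(t)^{1/n} < sqrt(1 - m_X(t)^2). -/
open MeasureTheory Set

lemma integral_Ioi_pos_aux (g : ℝ → ℝ) (hg : Integrable g) (s : ℝ) (hs : s < 1)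
    (h0 : ∀ x ∈ Ioi s, 0 ≤ g x) (h1 : ∀ x ∈ Ioo s 1, 0 < g x) :
    0 < ∫ x in Ioi s, g x := by
  rw [setIntegral_pos_iff_support_of_nonneg_ae
      ((ae_restrict_iff' measurableSet_Ioi).mpr (Filter.Eventually.of_forall h0))
      hg.integrableOn]
  refine lt_of_lt_of_le ?_ (measure_mono (show Ioo s 1 ⊆ Function.support g ∩ Ioi s from
    fun x hx => ⟨(h1 x hx).ne', hx.1⟩))
  rw [Real.volume_Ioo]
  exact ENNReal.ofReal_pos.mpr (by linarith)

/-- If `p α ^ (1/n) ≤ √(1 - m α ^ 2)` and `(m t - t) · m t / (1 - m t ^ 2) < 1/n`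
for all `t ∈ (α, β)`, then `p t ^ (1/n) < √(1 - m t ^ 2)` for all `t ∈ (α, β)`. -/
theorem tail_rpow_lt_sqrt_of_derived_ineq (f : ℝ → ℝ) (n : ℕ) (hn : 0 < n)
    (hf_nonneg : ∀ x, 0 ≤ f x)
    (hf_cont : ContinuousOn f (Ioo (-1 : ℝ) 1))
    (hf_pos : ∀ x ∈ Ioo (-1 : ℝ) 1, 0 < f x)
    (hf_supp : ∀ x, x ∉ Icc (-1 : ℝ) 1 → f x = 0)
    (hf_prob : ∫ x, f x = 1)
    (p : ℝ → ℝ) (hp : ∀ t, p t = ∫ x in Ioi t, f x)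
    (m : ℝ → ℝ) (hm : ∀ t, m t = (∫ x in Ioi t, x * f x) / p t)
    (α β : ℝ) (hα : -1 ≤ α) (hαβ : α < β) (hβ : β ≤ 1)
    (hstart : p α ^ ((1 : ℝ) / n) ≤ Real.sqrt (1 - m α ^ 2))
    (hderiv : ∀ t ∈ Ioo α β, (m t - t) * (m t / (1 - m t ^ 2)) < 1 / n) :
    ∀ t ∈ Ioo α β, p t ^ ((1 : ℝ) / n) < Real.sqrt (1 - m t ^ 2) := by
  have hn' : (0 : ℝ) < n := Nat.cast_pos.mpr hn
  -- integrability
  have hf_int : Integrable f := by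
    by_contra h
    rw [integral_undef h] at hf_prob
    exact one_ne_zero hf_prob.symm
  set q : ℝ → ℝ := fun t => ∫ x in Ioi t, x * f x with hq_def
  have hg_int : Integrable (fun x => x * f x) := by
    refine hf_int.mono (aestronglyMeasurable_id.mul hf_int.aestronglyMeasurable)
      (Filter.Eventually.of_forall fun x => ?_)
    by_cases hx : x ∈ Icc (-1 : ℝ) 1
    · rw [Real.norm_eq_abs, Real.norm_eq_abs, abs_mul]
      have : |x| ≤ 1 := abs_le.mpr ⟨hx.1, hx.2⟩
      nlinarith [abs_nonneg (f x), abs_nonneg x]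
    · simp [hf_supp x hx]
  have hmq : ∀ t, m t = q t / p t := hm
  -- interval representation of p and q
  have keyp : ∀ a b : ℝ, a ≤ b → p a = (∫ x in Ioc a b, f x) + p b := by
    intro a b hab
    rw [hp, hp, ← setIntegral_union (Ioc_disjoint_Ioi le_rfl) measurableSet_Ioi
      hf_int.integrableOn hf_int.integrableOn, Ioc_union_Ioi_eq_Ioi hab]
  have keyq : ∀ a b : ℝ, a ≤ b → q a = (∫ x in Ioc a b, x * f x) + q b := by
    intro a b hab
    rw [hq_def, ← setIntegral_union (Ioc_disjoint_Ioi le_rfl) measurableSet_Ioi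
      hg_int.integrableOn hg_int.integrableOn, Ioc_union_Ioi_eq_Ioi hab]
  have hpEq : ∀ s : ℝ, p s = p 0 - ∫ x in (0:ℝ)..s, f x := by
    intro s
    rcases le_total 0 s with h | h
    · rw [intervalIntegral.integral_of_le h]
      have := keyp 0 s h
      linarith
    · rw [intervalIntegral.integral_of_ge h]
      have := keyp s 0 h
      linarith
  have hqEq : ∀ s : ℝ, q s = q 0 - ∫ x in (0:ℝ)..s, x * f x := by
    intro s
    rcases le_total 0 s with h | h
    · rw [intervalIntegral.integral_of_le h]
      have := keyq 0 s h
      linarith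
    · rw [intervalIntegral.integral_of_ge h]
      have := keyq s 0 h
      linarith
  -- continuity of p and q
  have hp_cont : Continuous p := by
    have : Continuous fun s => p 0 - ∫ x in (0:ℝ)..s, f x :=
      continuous_const.sub (intervalIntegral.continuous_primitive
        (fun a b => hf_int.intervalIntegrable) 0)
    exact this.congr fun s => (hpEq s).symm
  have hq_cont : Continuous q := by
    have : Continuous fun s => q 0 - ∫ x in (0:ℝ)..s, x * f x :=
      continuous_const.sub (intervalIntegral.continuous_primitive
        (fun a b => hg_int.intervalIntegrable) 0)
    exact this.congr fun s => (hqEq s).symm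
  -- derivatives of p and q on (-1,1)
  have hp' : ∀ x ∈ Ioo (-1:ℝ) 1, HasDerivAt p (-f x) x := by
    intro x hx
    have h1 : HasDerivAt (fun s => ∫ u in (0:ℝ)..s, f u) (f x) x :=
      intervalIntegral.integral_hasDerivAt_right hf_int.intervalIntegrable
        ⟨univ, Filter.univ_mem, hf_int.aestronglyMeasurable.restrict⟩
        (hf_cont.continuousAt (isOpen_Ioo.mem_nhds hx))
    exact (h1.const_sub (p 0)).congr_of_eventuallyEq
      (Filter.Eventually.of_forall hpEq)
  have hq' : ∀ x ∈ Ioo (-1:ℝ) 1, HasDerivAt q (-(x * f x)) x := by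
    intro x hx
    have h1 : HasDerivAt (fun s => ∫ u in (0:ℝ)..s, u * f u) (x * f x) x :=
      intervalIntegral.integral_hasDerivAt_right hg_int.intervalIntegrable
        ⟨univ, Filter.univ_mem, hg_int.aestronglyMeasurable.restrict⟩
        (continuousAt_id.mul (hf_cont.continuousAt (isOpen_Ioo.mem_nhds hx)))
    exact (h1.const_sub (q 0)).congr_of_eventuallyEq
      (Filter.Eventually.of_forall hqEq)
  -- positivity of p
  have hppos : ∀ s : ℝ, -1 ≤ s → s < 1 → 0 < p s := by
    intro s hs1 hs2
    rw [hp]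
    exact integral_Ioi_pos_aux f hf_int s hs2 (fun x _ => hf_nonneg x)
      (fun x hx => hf_pos x ⟨by linarith [hx.1], hx.2⟩)
  -- bounds on m
  have hmbnd : ∀ s : ℝ, -1 ≤ s → s < 1 → (s < m s ∧ -1 < m s ∧ m s < 1) := by
    intro s hs1 hs2
    have hps := hppos s hs1 hs2
    have hsupp0 : ∀ x : ℝ, 1 < x → f x = 0 := by
      intro x hx
      exact hf_supp x (by simp [mem_Icc]; intro; linarith)
    have h1 : 0 < ∫ x in Ioi s, (1 - x) * f x := by
      refine integral_Ioi_pos_aux _ ?_ s hs2 ?_ ?_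
      · have : (fun x => (1 - x) * f x) = fun x => f x - x * f x := by
          funext x; ring
        rw [this]; exact hf_int.sub hg_int
      · intro x _
        rcases le_or_gt x 1 with h | h
        · exact mul_nonneg (by linarith) (hf_nonneg x)
        · simp [hsupp0 x h]
      · intro x hx
        exact mul_pos (by linarith [hx.2]) (hf_pos x ⟨by linarith [hx.1], hx.2⟩)
    have h2 : 0 < ∫ x in Ioi s, (1 + x) * f x := by
      refine integral_Ioi_pos_aux _ ?_ s hs2 ?_ ?_
      · have : (fun x => (1 + x) * f x) = fun x => f x + x * f x := by
          funext x; ring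
        rw [this]; exact hf_int.add hg_int
      · intro x hx
        exact mul_nonneg (by simp at hx; linarith) (hf_nonneg x)
      · intro x hx
        exact mul_pos (by linarith [hx.1]) (hf_pos x ⟨by linarith [hx.1], hx.2⟩)
    have h3 : 0 < ∫ x in Ioi s, (x - s) * f x := by
      refine integral_Ioi_pos_aux _ ?_ s hs2 ?_ ?_
      · have : (fun x => (x - s) * f x) = fun x => x * f x - s * f x := by
          funext x; ring
        rw [this]; exact hg_int.sub (hf_int.const_mul s)
      · intro x hx
        exact mul_nonneg (by simp at hx; linarith) (hf_nonneg x)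
      · intro x hx
        exact mul_pos (by linarith [hx.1]) (hf_pos x ⟨by linarith [hx.1], hx.2⟩)
    have e1 : ∫ x in Ioi s, (1 - x) * f x = p s - q s := by
      have : (fun x => (1 - x) * f x) = fun x => f x - x * f x := by funext x; ring
      rw [this, integral_sub hf_int.integrableOn hg_int.integrableOn, hp, hq_def]
    have e2 : ∫ x in Ioi s, (1 + x) * f x = p s + q s := by
      have : (fun x => (1 + x) * f x) = fun x => f x + x * f x := by funext x; ring
      rw [this, integral_add hf_int.integrableOn hg_int.integrableOn, hp, hq_def]
    have e3 : ∫ x in Ioi s, (x - s) * f x = q s - s * p s := by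
      have : (fun x => (x - s) * f x) = fun x => x * f x - s * f x := by funext x; ring
      rw [this, integral_sub hg_int.integrableOn ((hf_int.const_mul s).integrableOn),
        integral_const_mul, hp, hq_def]
    rw [e1] at h1; rw [e2] at h2; rw [e3] at h3
    refine ⟨?_, ?_, ?_⟩
    · rw [hmq]; rw [lt_div_iff₀ hps]; linarith
    · rw [hmq]; rw [lt_div_iff₀ hps]; linarith
    · rw [hmq]; rw [div_lt_one hps]; linarith
  -- main part
  intro t₀ ht₀
  obtain ⟨hαt₀, ht₀β⟩ := ht₀
  have ht₀1 : t₀ < 1 := lt_of_lt_of_le ht₀β hβ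
  set φ : ℝ → ℝ := fun s => (1 / n : ℝ) * Real.log (p s) - (1 / 2) * Real.log (1 - m s ^ 2)
    with hφ_def
  have hpα : 0 < p α := hppos α hα (lt_of_lt_of_le hαβ hβ)
  have hmsqα : 0 < 1 - m α ^ 2 := by
    have h := lt_of_lt_of_le (Real.rpow_pos_of_pos hpα ((1:ℝ)/n)) hstart
    exact Real.sqrt_pos.mp h
  have hIcc : ∀ s ∈ Icc α t₀, 0 < p s ∧ 0 < 1 - m s ^ 2 := by
    intro s hs
    have hs1 : -1 ≤ s := le_trans hα hs.1
    have hs2 : s < 1 := lt_of_le_of_lt hs.2 ht₀1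
    refine ⟨hppos s hs1 hs2, ?_⟩
    rcases eq_or_lt_of_le hs.1 with h | h
    · rw [← h]; exact hmsqα
    · obtain ⟨_, hb1, hb2⟩ := hmbnd s hs1 hs2
      nlinarith
  -- continuity of φ on Icc α t₀
  have hφ_cont : ContinuousOn φ (Icc α t₀) := by
    have hmC : ContinuousOn m (Icc α t₀) := by
      refine ContinuousOn.congr (f := fun s => q s / p s) ?_ (fun s _ => hmq s)
      exact hq_cont.continuousOn.div hp_cont.continuousOn
        (fun s hs => (hIcc s hs).1.ne')
    refine ContinuousOn.sub (continuousOn_const.mul ?_) (continuousOn_const.mul ?_)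
    · exact (hp_cont.continuousOn.log (fun s hs => (hIcc s hs).1.ne'))
    · exact ((continuousOn_const.sub (hmC.pow 2)).log (fun s hs => (hIcc s hs).2.ne'))
  -- derivative of φ is negative on Ioo α t₀
  have hφ_deriv : ∀ x ∈ Ioo α t₀, deriv φ x < 0 := by
    intro x hx
    have hx1 : -1 < x := lt_of_le_of_lt hα hx.1
    have hx2 : x < 1 := lt_of_lt_of_le (lt_of_lt_of_le hx.2 ht₀1.le) le_rfl
    have hxI : x ∈ Ioo (-1:ℝ) 1 := ⟨hx1, hx2⟩
    have hxαβ : x ∈ Ioo α β := ⟨hx.1, lt_of_lt_of_le hx.2 ht₀β.le⟩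
    have hpx : 0 < p x := hppos x hx1.le hx2
    obtain ⟨hmx1, hmx2, hmx3⟩ := hmbnd x hx1.le hx2
    have hmsq : 0 < 1 - m x ^ 2 := by nlinarith
    have hp'x := hp' x hxI
    have hq'x := hq' x hxI
    set D : ℝ := f x * (m x - x) / p x with hD_def
    have hm'x : HasDerivAt m D x := by
      have h := hq'x.div hp'x hpx.ne'
      have heq : (-(x * f x) * p x - q x * (-f x)) / p x ^ 2 = D := by
        rw [hD_def, hmq]
        field_simp
        ring
      rw [heq] at h
      exact h.congr_of_eventuallyEq (Filter.Eventually.of_forall hmq)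
    have hlog1 : HasDerivAt (fun s => Real.log (p s)) (-f x / p x) x :=
      hp'x.log hpx.ne'
    have hsq : HasDerivAt (fun s => 1 - m s ^ 2) (-((2:ℕ) * m x ^ 1 * D)) x :=
      (hm'x.pow 2).const_sub 1
    have hlog2 : HasDerivAt (fun s => Real.log (1 - m s ^ 2))
        (-((2:ℕ) * m x ^ 1 * D) / (1 - m x ^ 2)) x := hsq.log hmsq.ne'
    have hφ'x : HasDerivAt φ
        ((1 / n : ℝ) * (-f x / p x) - (1 / 2) * (-((2:ℕ) * m x ^ 1 * D) / (1 - m x ^ 2))) x :=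
      (hlog1.const_mul _).sub (hlog2.const_mul _)
    have hval : (1 / n : ℝ) * (-f x / p x) - (1 / 2) * (-((2:ℕ) * m x ^ 1 * D) / (1 - m x ^ 2))
        = (f x / p x) * ((m x - x) * (m x / (1 - m x ^ 2)) - 1 / n) := by
      rw [hD_def]
      field_simp
      ring
    rw [hφ'x.deriv, hval]
    refine mul_neg_of_pos_of_neg (div_pos (hf_pos x hxI) hpx) ?_
    have := hderiv x hxαβ
    linarith
  -- φ strictly decreasing
  have hanti : StrictAntiOn φ (Icc α t₀) := by
    refine strictAntiOn_of_deriv_neg (convex_Icc α t₀) hφ_cont ?_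
    rw [interior_Icc]
    exact hφ_deriv
  have hφlt : φ t₀ < φ α :=
    hanti (left_mem_Icc.mpr hαt₀.le) (right_mem_Icc.mpr hαt₀.le) hαt₀
  have hφα : φ α ≤ 0 := by
    have h1 := Real.log_le_log (Real.rpow_pos_of_pos hpα ((1:ℝ)/n)) hstart
    rw [Real.log_rpow hpα, Real.log_sqrt hmsqα.le] at h1
    simp only [hφ_def]
    linarith
  have hpt₀ : 0 < p t₀ := (hIcc t₀ (right_mem_Icc.mpr hαt₀.le)).1
  have hmsqt₀ : 0 < 1 - m t₀ ^ 2 := (hIcc t₀ (right_mem_Icc.mpr hαt₀.le)).2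
  have e1 : p t₀ ^ ((1:ℝ)/n) = Real.exp (Real.log (p t₀) * ((1:ℝ)/n)) :=
    Real.rpow_def_of_pos hpt₀ _
  have e2 : Real.sqrt (1 - m t₀ ^ 2) = Real.exp (Real.log (1 - m t₀ ^ 2) * (1/2)) := by
    rw [Real.sqrt_eq_rpow, Real.rpow_def_of_pos hmsqt₀]
  rw [e1, e2]
  apply Real.exp_lt_exp.mpr
  have hφt₀ : (1 / n : ℝ) * Real.log (p t₀) - (1 / 2) * Real.log (1 - m t₀ ^ 2) < 0 := by
    have := hφlt.trans_le hφα
    simpa [hφ_def] using this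
  nlinarith [hφt₀]
end

section
/- Let X be a random variable with log-concave density f on [-1,1] and E[X] = 0. Then the truncated mean satisfies m_X(t) ≤ (1+t)/2 for all t in [-1,1). -/
/-!
Put `c = (1 + t) / 2` and `ψ = 1_{(t,1]} (x - c)`; the claim is `∫ ψ f ≤ 0`, with equality for the
uniform density `1/2`. Log-concavity makes `f` quasiconcave, so `{f > 1/2}` is an interval. As `f`
and `1/2` have the same mass and mean, `f - 1/2` is orthogonal to affine functions `L`, so
`∫ ψ f ≤ 0` as soon as `(ψ - L) (f - 1/2) ≤ 0` for some `L`. Such an `L` exists unless `{f > 1/2}`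
meets `[-1, t]` but not `(c, 1]`. In that case `f x ≤ f (1 + t - x)` on `(c, 1]`, and reflecting
`(c, 1]` onto `[t, c)` puts the mean of `f` on `(t, 1]` below the midpoint `c`.
-/

open MeasureTheory Set

theorem quasiconcaveOn_of_rpow_mul_rpow_le {E : Type*} [AddCommGroup E] [Module ℝ E]
    {s : Set E} {f : E → ℝ} (hs : Convex ℝ s) (hf₀ : ∀ x ∈ s, 0 ≤ f x)
    (hf : ∀ x ∈ s, ∀ y ∈ s, ∀ a b : ℝ, 0 ≤ a → 0 ≤ b → a + b = 1 →
      f x ^ a * f y ^ b ≤ f (a • x + b • y)) :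
    QuasiconcaveOn ℝ s f := by
  refine quasiconcaveOn_iff_min_le.2 ⟨hs, fun x hx y hy a b ha hb hab => ?_⟩
  have hm : 0 ≤ min (f x) (f y) := le_min (hf₀ x hx) (hf₀ y hy)
  calc min (f x) (f y) = min (f x) (f y) ^ a * min (f x) (f y) ^ b := by
        rw [← Real.rpow_add' hm (by simp [hab]), hab, Real.rpow_one]
    _ ≤ f x ^ a * f y ^ b := by
        gcongr
        exacts [Real.rpow_nonneg (hf₀ x hx) a, min_le_left _ _, min_le_right _ _]
    _ ≤ f (a • x + b • y) := hf x hx y hy a b ha hb hab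

theorem integral_mul_nonpos_of_sign_sub_affine {μ : Measure ℝ} {h ψ : ℝ → ℝ} (p q : ℝ)
    (hh : Integrable h μ) (hxh : Integrable (fun x => x * h x) μ)
    (hψh : Integrable (fun x => ψ x * h x) μ)
    (h₀ : ∫ x, h x ∂μ = 0) (h₁ : ∫ x, x * h x ∂μ = 0)
    (hsign : ∀ᵐ x ∂μ, (ψ x - (p * x + q)) * h x ≤ 0) :
    ∫ x, ψ x * h x ∂μ ≤ 0 := by
  have hLh : Integrable (fun x => (p * x + q) * h x) μ := by
    refine ((hxh.const_mul p).add (hh.const_mul q)).congr (.of_forall fun x => ?_)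
    simp only [Pi.add_apply]; ring
  have hL : ∫ x, (p * x + q) * h x ∂μ = 0 := by
    simp_rw [add_mul, mul_assoc]
    rw [integral_add (hxh.const_mul p) (hh.const_mul q), integral_const_mul, integral_const_mul,
      h₀, h₁, mul_zero, mul_zero, add_zero]
  calc ∫ x, ψ x * h x ∂μ
      = ∫ x, (ψ x - (p * x + q)) * h x ∂μ + ∫ x, (p * x + q) * h x ∂μ := by
        rw [← integral_add]
        · simp_rw [sub_mul, sub_add_cancel]
        · refine (hψh.sub hLh).congr (.of_forall fun x => ?_)
          simp only [Pi.sub_apply]; ring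
        · exact hLh
    _ ≤ 0 := by rw [hL, add_zero]; exact integral_nonpos_of_ae hsign

theorem intervalIntegral_sub_midpoint_mul_nonpos {f : ℝ → ℝ} {a b : ℝ} (hab : a ≤ b)
    (hf : IntervalIntegrable (fun x => (x - (a + b) / 2) * f x) volume a b)
    (hrefl : ∀ x ∈ Ioc ((a + b) / 2) b, f x ≤ f (a + b - x)) :
    ∫ x in a..b, (x - (a + b) / 2) * f x ≤ 0 := by
  set G : ℝ → ℝ := fun x => (x - (a + b) / 2) * f x
  have hG' : IntervalIntegrable (fun x => G (a + b - x)) volume a b := by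
    simpa using (hf.comp_sub_left (a + b)).symm
  have hswap : ∫ x in a..b, G (a + b - x) = ∫ x in a..b, G x := by
    rw [intervalIntegral.integral_comp_sub_left]; simp
  have hpair : ∀ x ∈ Icc a b, G x + G (a + b - x) ≤ 0 := by
    intro x hx
    rw [show G x + G (a + b - x) = (x - (a + b) / 2) * (f x - f (a + b - x)) by
      simp only [G]; ring]
    rcases lt_trichotomy x ((a + b) / 2) with hxm | hxm | hxm
    · have := hrefl (a + b - x) ⟨by linarith, by linarith [hx.1]⟩
      rw [sub_sub_cancel] at this
      exact mul_nonpos_of_nonpos_of_nonneg (by linarith) (by linarith)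
    · rw [hxm, sub_self, zero_mul]
    · exact mul_nonpos_of_nonneg_of_nonpos (by linarith) (by linarith [hrefl x ⟨hxm, hx.2⟩])
  have hsum : 0 ≤ ∫ x in a..b, -(G x + G (a + b - x)) :=
    intervalIntegral.integral_nonneg hab fun x hx => neg_nonneg.2 (hpair x hx)
  rw [intervalIntegral.integral_neg, intervalIntegral.integral_add hf hG', hswap] at hsum
  change ∫ x in a..b, G x ≤ 0
  linarith

theorem QuasiconcaveOn.intervalIntegral_sub_midpoint_mul_nonpos {s : Set ℝ} {f : ℝ → ℝ}
    (hf : QuasiconcaveOn ℝ s f) {x₀ a b : ℝ} (hs : Icc x₀ b ⊆ s) (hx₀a : x₀ ≤ a) (hab : a ≤ b)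
    (hint : IntervalIntegrable (fun x => (x - (a + b) / 2) * f x) volume a b)
    (hle : ∀ x ∈ Ioc ((a + b) / 2) b, f x ≤ f x₀) :
    ∫ x in a..b, (x - (a + b) / 2) * f x ≤ 0 := by
  refine _root_.intervalIntegral_sub_midpoint_mul_nonpos hab hint fun x hx => ?_
  have hx₀ : x₀ ∈ {y | y ∈ s ∧ f x ≤ f y} := ⟨hs ⟨le_rfl, hx₀a.trans hab⟩, hle x hx⟩
  have hx' : x ∈ {y | y ∈ s ∧ f x ≤ f y} := ⟨hs ⟨by linarith [hx.1], hx.2⟩, le_rfl⟩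
  exact ((hf (f x)).ordConnected.out hx₀ hx' ⟨by linarith [hx.2], by linarith [hx.1]⟩).2

theorem MeasureTheory.Integrable.continuousOn_mul_of_support_subset {X : Type*} [TopologicalSpace X]
    [T2Space X] [MeasurableSpace X] [OpensMeasurableSpace X] {μ : Measure X} {f g : X → ℝ}
    {K : Set X} (hf : Integrable f μ) (hK : IsCompact K) (hfK : Function.support f ⊆ K)
    (hg : ContinuousOn g K) : Integrable (fun x => g x * f x) μ :=
  (hf.integrableOn.continuousOn_mul hg hK).integrable_of_forall_notMem_eq_zero fun x hx => by
    simp [Function.notMem_support.1 fun h => hx (hfK h)]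

theorem setIntegral_Icc_sub_half_eq_zero {f : ℝ → ℝ} (hf : Integrable f)
    (hf_supp : ∀ x, x ∉ Icc (-1 : ℝ) 1 → f x = 0) (hf_prob : ∫ x, f x = 1) :
    ∫ x in Icc (-1) 1, (f x - 1 / 2) = 0 := by
  rw [integral_sub hf.integrableOn (integrableOn_const (by simp)),
    setIntegral_eq_integral_of_forall_compl_eq_zero hf_supp, hf_prob]
  norm_num [setIntegral_const]

theorem setIntegral_Icc_mul_sub_half_eq_zero {f : ℝ → ℝ} (hf : Integrable f)
    (hf_supp : ∀ x, x ∉ Icc (-1 : ℝ) 1 → f x = 0) (hf_mean : ∫ x, x * f x = 0) :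
    ∫ x in Icc (-1) 1, x * (f x - 1 / 2) = 0 := by
  simp_rw [mul_sub]
  rw [integral_sub ((hf.continuousOn_mul_of_support_subset isCompact_Icc
      (Function.support_subset_iff'.2 hf_supp) continuous_id'.continuousOn).integrableOn)
      (continuous_mul_const (1 / 2)).integrableOn_Icc,
    setIntegral_eq_integral_of_forall_compl_eq_zero fun x hx => by simp [hf_supp x hx],
    hf_mean, integral_mul_const, integral_Icc_eq_integral_Ioc,
    ← intervalIntegral.integral_of_le (by norm_num), integral_id]
  norm_num

theorem setIntegral_Ioc_sub_mul_nonpos_of_sign {f : ℝ → ℝ} (hf : Integrable f)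
    (hf_supp : ∀ x, x ∉ Icc (-1 : ℝ) 1 → f x = 0) (hf_prob : ∫ x, f x = 1)
    (hf_mean : ∫ x, x * f x = 0) {t : ℝ} (ht : t ∈ Icc (-1 : ℝ) 1) (p q : ℝ)
    (hsign : ∀ x ∈ Icc (-1 : ℝ) 1,
      ((Ioc t 1).indicator (fun x => x - (1 + t) / 2) x - (p * x + q)) * (f x - 1 / 2) ≤ 0) :
    ∫ x in Ioc t 1, (x - (1 + t) / 2) * f x ≤ 0 := by
  set c := (1 + t) / 2
  have hsub : Ioc t 1 ⊆ Icc (-1) 1 := fun x hx => ⟨by linarith [ht.1, hx.1], hx.2⟩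
  have hh : IntegrableOn (fun x => f x - 1 / 2) (Icc (-1) 1) :=
    hf.integrableOn.sub (integrableOn_const (by simp))
  have hmul : ∀ g : ℝ → ℝ, Continuous g →
      IntegrableOn (fun x => g x * (f x - 1 / 2)) (Icc (-1) 1) :=
    fun g hg => hh.continuousOn_mul hg.continuousOn isCompact_Icc
  have hψ : (fun x => (Ioc t 1).indicator (fun x => x - c) x * (f x - 1 / 2))
      = (Ioc t 1).indicator (fun x => (x - c) * (f x - 1 / 2)) :=
    funext fun x => (indicator_mul_left _ (fun x => x - c) fun x => f x - 1 / 2).symm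
  have hψint : ∫ x in Icc (-1) 1, (Ioc t 1).indicator (fun x => x - c) x * (f x - 1 / 2)
      = ∫ x in Ioc t 1, (x - c) * f x := by
    have huniform : ∫ x in Ioc t 1, (x - c) = 0 := by
      rw [← intervalIntegral.integral_of_le ht.2,
        intervalIntegral.integral_comp_sub_right (fun x => x), integral_id]
      ring
    rw [hψ, setIntegral_indicator measurableSet_Ioc, inter_eq_right.2 hsub]
    simp_rw [mul_sub]
    have hint : IntegrableOn (fun x => (x - c) * (1 / 2)) (Ioc t 1) :=
      (continuous_mul_const _).comp (continuous_sub_right c) |>.integrableOn_Icc.mono_set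
        Ioc_subset_Icc_self
    have hint' : Integrable (fun x => (x - c) * f x) :=
      hf.continuousOn_mul_of_support_subset isCompact_Icc
        (Function.support_subset_iff'.2 hf_supp) (continuous_sub_right c).continuousOn
    rw [integral_sub hint'.integrableOn hint, integral_mul_const,
      huniform, zero_mul, sub_zero]
  have := integral_mul_nonpos_of_sign_sub_affine p q hh (hmul id continuous_id)
    (hψ ▸ (hmul _ (continuous_sub_right c)).indicator measurableSet_Ioc)
    (setIntegral_Icc_sub_half_eq_zero hf hf_supp hf_prob)
    (setIntegral_Icc_mul_sub_half_eq_zero hf hf_supp hf_mean)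
    (ae_restrict_of_forall_mem measurableSet_Icc hsign)
  rwa [hψint] at this

theorem setIntegral_Ioc_sub_mul_nonpos_of_gt_half {f : ℝ → ℝ}
    (hq : QuasiconcaveOn ℝ (Icc (-1) 1) f) (hf : Integrable f)
    (hf_supp : ∀ x, x ∉ Icc (-1 : ℝ) 1 → f x = 0) (hf_prob : ∫ x, f x = 1)
    (hf_mean : ∫ x, x * f x = 0) {t : ℝ} (ht : t ∈ Icc (-1 : ℝ) 1)
    {x₀ x₁ : ℝ} (hx₀ : x₀ ∈ Icc (-1) t) (hfx₀ : 1 / 2 < f x₀)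
    (hx₁ : x₁ ∈ Ioc ((1 + t) / 2) 1) (hfx₁ : 1 / 2 < f x₁) :
    ∫ x in Ioc t 1, (x - (1 + t) / 2) * f x ≤ 0 := by
  set c := (1 + t) / 2 with hc
  set U := {x | x ∈ Icc (-1 : ℝ) 1 ∧ 1 / 2 < f x}
  have hU₀ : x₀ ∈ U := ⟨⟨hx₀.1, hx₀.2.trans ht.2⟩, hfx₀⟩
  have hU₁ : x₁ ∈ U := ⟨⟨by linarith [ht.1, hx₁.1, hc], hx₁.2⟩, hfx₁⟩
  have hbelow : BddBelow U := ⟨-1, fun x hx => hx.1.1⟩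
  have habove : BddAbove U := ⟨1, fun x hx => hx.1.2⟩
  set l := sInf U
  set r := sSup U
  have hl : l ≤ x₀ := csInf_le hbelow hU₀
  have hr : x₁ ≤ r := le_csSup habove hU₁
  have hU_sub : U ⊆ Icc l r := subset_Icc_csInf_csSup hbelow habove
  have hU_sup : Ioo l r ⊆ U :=
    ((hq.convex_gt (1 / 2)).isConnected ⟨x₀, hU₀⟩).Ioo_csInf_csSup_subset hbelow habove
  have hrl : 0 < r - l := by linarith [hx₀.2, hx₁.1, hx₁.2]
  -- The line `x ↦ s (x - l)` passes through `(l, 0)` and `(r, r - c)`, so its difference with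
  -- `ψ` changes sign exactly at the endpoints `l`, `r` of `{f > 1/2}`.
  set s := (r - c) / (r - l)
  have hs : s * (r - l) = r - c := div_mul_cancel₀ _ hrl.ne'
  have hs₀ : 0 ≤ s := div_nonneg (by linarith [hx₁.1]) hrl.le
  have hs₁ : s ≤ 1 := (div_le_one hrl).2 (by linarith [hx₀.2, hx₁.1, hx₁.2])
  refine setIntegral_Ioc_sub_mul_nonpos_of_sign hf hf_supp hf_prob hf_mean ht s (-(s * l))
    fun x hx => ?_
  by_cases hxU : x ∈ U
  · obtain ⟨hlx, hxr⟩ := hU_sub hxU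
    refine mul_nonpos_of_nonpos_of_nonneg ?_ (by linarith [hxU.2])
    by_cases hxt : x ∈ Ioc t 1
    · rw [indicator_of_mem hxt]; nlinarith
    · rw [indicator_of_notMem hxt]; nlinarith
  · have hfx : f x ≤ 1 / 2 := not_lt.1 fun h => hxU ⟨hx, h⟩
    refine mul_nonpos_of_nonneg_of_nonpos ?_ (by linarith)
    rcases le_or_gt x l with hxl | hlx
    · rw [indicator_of_notMem fun h : x ∈ Ioc t 1 => by linarith [h.1, hx₀.2]]; nlinarith
    · have hrx : r ≤ x := not_lt.1 fun hxr => hxU (hU_sup ⟨hlx, hxr⟩)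
      rw [indicator_of_mem (show x ∈ Ioc t 1 from ⟨by linarith [hx₁.1, hx₁.2], hx.2⟩)]
      nlinarith

theorem setIntegral_Ioi_sub_mul_nonpos {f : ℝ → ℝ}
    (hq : QuasiconcaveOn ℝ (Icc (-1) 1) f) (hf : Integrable f)
    (hf_supp : ∀ x, x ∉ Icc (-1 : ℝ) 1 → f x = 0) (hf_prob : ∫ x, f x = 1)
    (hf_mean : ∫ x, x * f x = 0) {t : ℝ} (ht : t ∈ Icc (-1 : ℝ) 1) :
    ∫ x in Ioi t, (x - (1 + t) / 2) * f x ≤ 0 := by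
  rw [setIntegral_eq_of_subset_of_forall_sdiff_eq_zero measurableSet_Ioi Ioc_subset_Ioi_self
    fun x hx => by rw [hf_supp x fun h => hx.2 ⟨hx.1, h.2⟩, mul_zero]]
  by_cases hleft : ∃ x₀ ∈ Icc (-1) t, 1 / 2 < f x₀
  · obtain ⟨x₀, hx₀, hfx₀⟩ := hleft
    by_cases hright : ∃ x₁ ∈ Ioc ((1 + t) / 2) 1, 1 / 2 < f x₁
    · obtain ⟨x₁, hx₁, hfx₁⟩ := hright
      exact setIntegral_Ioc_sub_mul_nonpos_of_gt_half hq hf hf_supp hf_prob hf_mean ht hx₀ hfx₀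
        hx₁ hfx₁
    · push Not at hright
      rw [← intervalIntegral.integral_of_le ht.2, add_comm 1 t]
      refine hq.intervalIntegral_sub_midpoint_mul_nonpos (Icc_subset_Icc_left hx₀.1) hx₀.2 ht.2
        ?_ fun x hx => (hright x (by rwa [add_comm 1 t])).trans hfx₀.le
      exact (hf.continuousOn_mul_of_support_subset isCompact_Icc
        (Function.support_subset_iff'.2 hf_supp)
        (continuous_sub_right _).continuousOn).intervalIntegrable
  · push Not at hleft
    refine setIntegral_Ioc_sub_mul_nonpos_of_sign hf hf_supp hf_prob hf_mean ht 1 (-((1 + t) / 2))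
      fun x hx => ?_
    by_cases hxt : x ∈ Ioc t 1
    · rw [indicator_of_mem hxt, show x - (1 + t) / 2 - (1 * x + -((1 + t) / 2)) = 0 by ring,
        zero_mul]
    · have hxt' : x ≤ t := not_lt.1 fun h => hxt ⟨h, hx.2⟩
      rw [indicator_of_notMem hxt]
      exact mul_nonpos_of_nonneg_of_nonpos (by linarith [ht.2]) (by linarith [hleft x ⟨hx.1, hxt'⟩])

/-- If `X` has a log-concave density `f` on `[-1,1]` and `E[X] = 0`, then the truncated
mean satisfies `m_X(t) ≤ (1+t)/2` for all `t ∈ [-1,1)`. -/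
theorem truncated_mean_le_of_logConcave (f : ℝ → ℝ)
    (hf_nonneg : ∀ x, 0 ≤ f x)
    (hf_supp : ∀ x, x ∉ Icc (-1 : ℝ) 1 → f x = 0)
    (hf_prob : ∫ x, f x = 1)
    (hf_mean : ∫ x, x * f x = 0)
    (hf_lc : ∀ x ∈ Icc (-1 : ℝ) 1, ∀ y ∈ Icc (-1 : ℝ) 1, ∀ a b : ℝ,
      0 ≤ a → 0 ≤ b → a + b = 1 → f x ^ a * f y ^ b ≤ f (a * x + b * y)) :
    ∀ t ∈ Ico (-1 : ℝ) 1,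
      (∫ x in Ioi t, x * f x) / (∫ x in Ioi t, f x) ≤ (1 + t) / 2 := by
  intro t ht
  have hf : Integrable f := integrable_of_integral_eq_one hf_prob
  have hq : QuasiconcaveOn ℝ (Icc (-1) 1) f :=
    quasiconcaveOn_of_rpow_mul_rpow_le (convex_Icc _ _) (fun x _ => hf_nonneg x) hf_lc
  have hxf : Integrable (fun x => x * f x) :=
    hf.continuousOn_mul_of_support_subset isCompact_Icc (Function.support_subset_iff'.2 hf_supp)
      continuousOn_id
  have hkey := setIntegral_Ioi_sub_mul_nonpos hq hf hf_supp hf_prob hf_mean (Ico_subset_Icc_self ht)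
  rw [show (fun x => (x - (1 + t) / 2) * f x) = fun x => x * f x - (1 + t) / 2 * f x by
      ext x; ring, integral_sub hxf.integrableOn (hf.integrableOn.const_mul _),
    integral_const_mul] at hkey
  exact div_le_of_le_mul₀ (setIntegral_nonneg measurableSet_Ioi fun x _ => hf_nonneg x)
    (by linarith [ht.1]) (by linarith)
end

section
/- Let X be a random variable with log-concave density on [-1,1] and E[X] = 0. Then for every t in [-1,1) with m_X(t) > 0, one has (m_X(t) - t) · m_X(t)/(1 - m_X(t)^2) ≤ 1/2. -/
/-!
Log-concavity of `f` enters only through unimodality (quasi-concavity). Put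
`D(s) = tailDefect f 1 s = P(s < X ≤ 1) - (1 - s) f(s)`. By Fubini,
`∫_a^1 D = ∫_a^1 (2u - 1 - a) f(u) du`, which vanishes at `a = -1` because `E X = 0`, and
unimodality makes `D` single-crossing: once negative, it stays `≤ 0`. Hence `∫_t^1 D ≤ 0` for
every `t`, that is `m(t) ≤ (1 + t) / 2`, and the claim follows because
`3m² - 2tm - 1 ≤ -(m - 1)²` whenever `2m ≤ 1 + t`.
-/

open MeasureTheory Set

theorem QuasiconcaveOn.min_le_of_mem_Icc {β : Type*} [LinearOrder β] {s : Set ℝ} {f : ℝ → β}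
    (hf : QuasiconcaveOn ℝ s f) {x y z : ℝ} (hx : x ∈ s) (hy : y ∈ s) (hz : z ∈ Icc x y) :
    min (f x) (f y) ≤ f z :=
  ((convex_iff_ordConnected.1 (hf _)).out ⟨hx, min_le_left _ _⟩ ⟨hy, min_le_right _ _⟩ hz).2

section Tail

variable {f : ℝ → ℝ} {a b : ℝ}

theorem MeasureTheory.IntegrableOn.continuous_mul_Ioc {g : ℝ → ℝ}
    (hf : IntegrableOn f (Ioc a b)) (hg : Continuous g) :
    IntegrableOn (fun u => g u * f u) (Ioc a b) :=
  hf.continuousOn_mul_of_subset hg.continuousOn isCompact_Icc measurableSet_Ioc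
    Ioc_subset_Icc_self

theorem setIntegral_Ioc_le_of_le {c : ℝ} (hab : a ≤ b) (hf : IntegrableOn f (Ioc a b))
    (h : ∀ u ∈ Ioc a b, f u ≤ c) : ∫ u in Ioc a b, f u ≤ (b - a) * c := by
  simpa [Real.volume_real_Ioc_of_le hab] using
    setIntegral_mono_on hf (integrableOn_const measure_Ioc_lt_top.ne) measurableSet_Ioc h

theorem le_setIntegral_Ioc_of_le {c : ℝ} (hab : a ≤ b) (hf : IntegrableOn f (Ioc a b))
    (h : ∀ u ∈ Ioc a b, c ≤ f u) : (b - a) * c ≤ ∫ u in Ioc a b, f u := by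
  simpa [Real.volume_real_Ioc_of_le hab] using
    setIntegral_mono_on (integrableOn_const measure_Ioc_lt_top.ne) hf measurableSet_Ioc h

theorem integrable_indicator_Ioi_prod (hf : IntegrableOn f (Ioc a b)) :
    Integrable (Function.uncurry fun s u => (Ioi s).indicator f u)
      ((volume.restrict (Ioc a b)).prod (volume.restrict (Ioc a b))) :=
  have : IsFiniteMeasure (volume.restrict (Ioc a b)) :=
    isFiniteMeasure_restrict.2 measure_Ioc_lt_top.ne
  (hf.comp_snd _).indicator (measurableSet_lt measurable_fst measurable_snd)

theorem setIntegral_indicator_Ioi_of_mem {s : ℝ} (hs : s ∈ Ioc a b) :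
    ∫ u in Ioc a b, (Ioi s).indicator f u = ∫ u in Ioc s b, f u := by
  rw [setIntegral_indicator measurableSet_Ioi, Ioc_inter_Ioi, max_eq_right hs.1.le]

theorem setIntegral_indicator_Ioi_apply {u : ℝ} (hu : u ∈ Ioc a b) :
    ∫ s in Ioc a b, (Ioi s).indicator f u = (u - a) * f u := by
  have : Ioc a b ∩ Iio u = Ioo a u := by
    ext
    simp only [mem_inter_iff, mem_Ioc, mem_Iio, mem_Ioo]
    grind
  rw [show (fun s => (Ioi s).indicator f u) = (Iio u).indicator fun _ => f u by
      ext; simp only [indicator, mem_Ioi, mem_Iio],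
    setIntegral_indicator measurableSet_Iio, this, setIntegral_const,
    Real.volume_real_Ioo_of_le hu.1.le, smul_eq_mul]

theorem setIntegral_Ioc_integral_Ioc (hf : IntegrableOn f (Ioc a b)) :
    ∫ s in Ioc a b, ∫ u in Ioc s b, f u = ∫ u in Ioc a b, (u - a) * f u := by
  have hswap := integral_integral_swap (integrable_indicator_Ioi_prod hf)
  rwa [setIntegral_congr_fun measurableSet_Ioc fun _ => setIntegral_indicator_Ioi_of_mem,
    setIntegral_congr_fun measurableSet_Ioc fun _ => setIntegral_indicator_Ioi_apply] at hswap

theorem integrableOn_integral_Ioc (hf : IntegrableOn f (Ioc a b)) :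
    IntegrableOn (fun s => ∫ u in Ioc s b, f u) (Ioc a b) :=
  IntegrableOn.congr_fun (integrable_indicator_Ioi_prod hf).integral_prod_left
    (fun _ => setIntegral_indicator_Ioi_of_mem) measurableSet_Ioc

noncomputable def tailDefect (f : ℝ → ℝ) (b s : ℝ) : ℝ :=
  (∫ u in Ioc s b, f u) - (b - s) * f s

theorem integrableOn_tailDefect (hf : IntegrableOn f (Ioc a b)) :
    IntegrableOn (tailDefect f b) (Ioc a b) :=
  (integrableOn_integral_Ioc hf).sub (hf.continuous_mul_Ioc (g := (b - ·)) (by fun_prop))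

theorem setIntegral_tailDefect (hf : IntegrableOn f (Ioc a b)) :
    ∫ s in Ioc a b, tailDefect f b s = ∫ u in Ioc a b, (2 * u - a - b) * f u := by
  have hb := hf.continuous_mul_Ioc (g := (b - ·)) (by fun_prop)
  unfold tailDefect
  rw [integral_sub (integrableOn_integral_Ioc hf) hb, setIntegral_Ioc_integral_Ioc hf,
    ← integral_sub (hf.continuous_mul_Ioc (g := (· - a)) (by fun_prop)) hb]
  exact setIntegral_congr_fun measurableSet_Ioc fun u _ => by ring

/-- If `f` still rises somewhere after `s₂`, unimodality gives `f s₁ ≤ f s₂` and `f ≥ f s₁`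
on `[s₁, s₂]`, whence `tailDefect f b s₂ ≤ tailDefect f b s₁`; otherwise `f ≤ f s₂` on
`(s₂, b]`. -/
theorem tailDefect_le_max {s₁ s₂ : ℝ} (hf : IntegrableOn f (Ioc s₁ b))
    (hqc : QuasiconcaveOn ℝ (Icc s₁ b) f) (h₁₂ : s₁ ≤ s₂) (h₂ : s₂ ≤ b) :
    tailDefect f b s₂ ≤ max (tailDefect f b s₁) 0 := by
  unfold tailDefect
  by_cases hrise : ∃ y ∈ Ioc s₂ b, f s₂ < f y
  · obtain ⟨y, hy, hy₂⟩ := hrise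
    have hmin {z : ℝ} (hz : z ∈ Icc s₁ y) : min (f s₁) (f y) ≤ f z :=
      hqc.min_le_of_mem_Icc (left_mem_Icc.2 (h₁₂.trans h₂)) ⟨h₁₂.trans hy.1.le, hy.2⟩ hz
    have hs₁₂ : f s₁ ≤ f s₂ := by
      simpa [hy₂.not_ge] using hmin ⟨h₁₂, hy.1.le⟩
    have hlow : (s₂ - s₁) * f s₁ ≤ ∫ u in Ioc s₁ s₂, f u :=
      le_setIntegral_Ioc_of_le h₁₂ (hf.mono_set (Ioc_subset_Ioc_right h₂)) fun u hu => by
        simpa [hs₁₂.trans hy₂.le] using hmin ⟨hu.1.le, hu.2.trans hy.1.le⟩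
    rw [← Ioc_union_Ioc_eq_Ioc h₁₂ h₂, setIntegral_union (Ioc_disjoint_Ioc_of_le le_rfl)
      measurableSet_Ioc (hf.mono_set (Ioc_subset_Ioc_right h₂))
      (hf.mono_set (Ioc_subset_Ioc_left h₁₂))]
    exact le_max_of_le_left (by linarith [mul_le_mul_of_nonneg_left hs₁₂ (sub_nonneg.2 h₂)])
  · simp only [not_exists, not_and, not_lt] at hrise
    exact le_max_of_le_right <| sub_nonpos.2 <|
      setIntegral_Ioc_le_of_le h₂ (hf.mono_set (Ioc_subset_Ioc_left h₁₂)) hrise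

theorem setIntegral_Ioc_sub_midpoint_nonpos {t : ℝ}
    (hf : IntegrableOn f (Ioc a b)) (hqc : QuasiconcaveOn ℝ (Icc a b) f)
    (hmid : ∫ u in Ioc a b, (2 * u - a - b) * f u = 0) (ht : t ∈ Icc a b) :
    ∫ u in Ioc t b, (2 * u - t - b) * f u ≤ 0 := by
  have hD := integrableOn_tailDefect hf
  rw [← setIntegral_tailDefect (hf.mono_set (Ioc_subset_Ioc_left ht.1))]
  by_cases hcross : ∃ s ∈ Ioc a t, tailDefect f b s < 0
  · obtain ⟨s, hs, hDs⟩ := hcross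
    refine setIntegral_nonpos measurableSet_Ioc fun u hu => ?_
    have := tailDefect_le_max (hf.mono_set (Ioc_subset_Ioc_left hs.1.le))
      (Convex.quasiconcaveOn_restrict hqc (Icc_subset_Icc_left hs.1.le) (convex_Icc _ _))
      (hs.2.trans hu.1.le) hu.2
    rwa [max_eq_right hDs.le] at this
  · simp only [not_exists, not_and, not_lt] at hcross
    have hsplit := setIntegral_union (Ioc_disjoint_Ioc_of_le le_rfl) measurableSet_Ioc
      (hD.mono_set (Ioc_subset_Ioc_right ht.2)) (hD.mono_set (Ioc_subset_Ioc_left ht.1))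
    rw [Ioc_union_Ioc_eq_Ioc ht.1 ht.2, setIntegral_tailDefect hf, hmid] at hsplit
    linarith [setIntegral_nonneg (μ := volume) measurableSet_Ioc hcross]

theorem two_mul_setIntegral_Ioc_mul_le {t : ℝ}
    (hf : IntegrableOn f (Ioc a b)) (hqc : QuasiconcaveOn ℝ (Icc a b) f)
    (hmid : ∫ u in Ioc a b, (2 * u - a - b) * f u = 0) (ht : t ∈ Icc a b) :
    2 * ∫ u in Ioc t b, u * f u ≤ (t + b) * ∫ u in Ioc t b, f u := by
  have hft := hf.mono_set (Ioc_subset_Ioc_left ht.1)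
  rw [← integral_const_mul, ← integral_const_mul, ← sub_nonpos,
    ← integral_sub ((hft.continuous_mul_Ioc continuous_id').const_mul 2) (hft.const_mul _)]
  convert setIntegral_Ioc_sub_midpoint_nonpos hf hqc hmid ht using 3 with u
  ring

end Tail

theorem mul_div_one_sub_sq_le_half {m t : ℝ} (hm : 0 < m) (ht : t < 1) (hmt : 2 * m ≤ 1 + t) :
    (m - t) * (m / (1 - m ^ 2)) ≤ 1 / 2 := by
  have hm1 : m < 1 := by linarith
  rw [mul_div_assoc', div_le_iff₀ (by nlinarith)]
  nlinarith [mul_le_mul_of_nonneg_left hmt hm.le, sq_nonneg (m - 1)]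

theorem setIntegral_Ioi_eq_setIntegral_Ioc {g : ℝ → ℝ} {t b : ℝ}
    (hg : ∀ x, b < x → g x = 0) :
    ∫ x in Ioi t, g x = ∫ x in Ioc t b, g x :=
  setIntegral_eq_of_subset_of_forall_sdiff_eq_zero measurableSet_Ioi Ioc_subset_Ioi_self
    fun x hx => hg x (not_le.1 fun hxb => hx.2 ⟨hx.1, hxb⟩)

/-- If `X` has a log-concave density `f` on `[-1,1]` and `E[X] = 0`, then for every
`t ∈ [-1,1)` with `m_X(t) > 0`, one has `(m_X(t) - t) · m_X(t)/(1 - m_X(t)²) ≤ 1/2`. -/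
theorem derived_ineq_of_logConcave (f : ℝ → ℝ)
    (hf_nonneg : ∀ x, 0 ≤ f x)
    (hf_supp : ∀ x, x ∉ Icc (-1 : ℝ) 1 → f x = 0)
    (hf_prob : ∫ x, f x = 1)
    (hf_mean : ∫ x, x * f x = 0)
    (hf_lc : ∀ x ∈ Icc (-1 : ℝ) 1, ∀ y ∈ Icc (-1 : ℝ) 1, ∀ a b : ℝ,
      0 ≤ a → 0 ≤ b → a + b = 1 → f x ^ a * f y ^ b ≤ f (a * x + b * y))
    (m : ℝ → ℝ)
    (hm : ∀ t, m t = (∫ x in Ioi t, x * f x) / (∫ x in Ioi t, f x)) :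
    ∀ t ∈ Ico (-1 : ℝ) 1, 0 < m t →
      (m t - t) * (m t / (1 - m t ^ 2)) ≤ 1 / 2 := by
  intro t ht hmt
  have hf : IntegrableOn f (Ioc (-1) 1) :=
    (Integrable.of_integral_ne_zero (by rw [hf_prob]; exact one_ne_zero)).integrableOn
  have hqc := quasiconcaveOn_of_rpow_mul_rpow_le (convex_Icc _ _) (fun x _ => hf_nonneg x) hf_lc
  have hmid : ∫ u in Ioc (-1) 1, (2 * u - -1 - 1) * f u = 0 := by
    rw [← integral_Icc_eq_integral_Ioc, setIntegral_eq_integral_of_forall_compl_eq_zero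
      fun x hx => by rw [hf_supp x hx, mul_zero]]
    simp only [sub_neg_eq_add, add_sub_cancel_right, mul_assoc, integral_const_mul, hf_mean,
      mul_zero]
  have hsupp (x : ℝ) (hx : 1 < x) : f x = 0 := hf_supp x fun h => hx.not_ge h.2
  have hmt_eq : m t = (∫ x in Ioc t 1, x * f x) / ∫ x in Ioc t 1, f x := by
    rw [hm, setIntegral_Ioi_eq_setIntegral_Ioc hsupp,
      setIntegral_Ioi_eq_setIntegral_Ioc fun x hx => by rw [hsupp x hx, mul_zero]]
  have hP : 0 < ∫ x in Ioc t 1, f x := by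
    refine (setIntegral_nonneg measurableSet_Ioc fun x _ => hf_nonneg x).lt_of_ne fun hP => ?_
    rw [hmt_eq, ← hP, div_zero] at hmt
    exact hmt.false
  refine mul_div_one_sub_sq_le_half hmt ht.2 ?_
  rw [hmt_eq, mul_div_assoc', div_le_iff₀ hP, add_comm]
  exact two_mul_setIntegral_Ioc_mul_le hf hqc hmid ⟨ht.1, ht.2.le⟩
end

section
/- Let U_1,...,U_n be independent uniform random variables on [-1,1] and X = (1/n)∑ U_i. Then the function t ↦ P(X > t)^{1/n} is concave on [-1,1]. -/
open MeasureTheory Set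

/-- The distribution of `n` i.i.d. uniform random variables on `[-1,1]`. -/
noncomputable def unifCube (n : ℕ) : Measure (Fin n → ℝ) :=
  Measure.pi fun _ => (2 : ENNReal)⁻¹ • volume.restrict (Icc (-1 : ℝ) 1)

/-- `X = (1/n) ∑ᵢ Uᵢ`, the average of the coordinates. -/
noncomputable def avgCoord (n : ℕ) (u : Fin n → ℝ) : ℝ := (∑ i, u i) / n

/-- `p_X(t) = P(X > t)`. -/
noncomputable def tailP (n : ℕ) (t : ℝ) : ℝ :=
  (unifCube n {u | t < avgCoord n u}).toReal

/-- `m_X(t) = E[X ∣ X > t]`, the truncated mean. -/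
noncomputable def truncMean (n : ℕ) (t : ℝ) : ℝ :=
  (∫ u in {u | t < avgCoord n u}, avgCoord n u ∂(unifCube n)) / tailP n t

/-!
Write `Q n s = P(U₁ + ⋯ + Uₙ > s)`, so that `P(X > t) = Q n (n t)` and
`Q (n + 1) s = ½ ∫_{-1}^{1} Q n (s - x) dx`. By induction, `Q n ^ (1 / n)` is concave on
`(-∞, n]`, where `Q n` vanishes on `[n, ∞)`. The induction step is a one-dimensional
Borell–Brascamp–Lieb inequality for `φ = Q n ^ (1 / n)`: the superlevel sets of `x ↦ φ (s - x)`
on `[-1, 1]` are intervals ending at `1`, and by concavity of `φ` their lengths are jointly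
concave in the shift `s` and the level (one-dimensional Brunn–Minkowski). Integrating over the
levels, normalised by the maxima `φ (s - 1)`, and applying Hölder's inequality shows that
`(∫_{-1}^{1} φ (s - x) ^ n dx) ^ (1 / (n + 1))` is concave.
-/

lemma concaveOn_rpow_one_sub_mul_rpow {r : ℝ} (hr₀ : 0 < r) (hr₁ : r < 1) :
    ConcaveOn ℝ (Ici 0 ×ˢ Ici 0) fun z : ℝ × ℝ => z.1 ^ (1 - r) * z.2 ^ r := by
  refine ⟨(convex_Ici 0).prod (convex_Ici 0), fun z hz w hw a b ha hb hab => ?_⟩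
  obtain ⟨hz₁, hz₂⟩ := hz
  obtain ⟨hw₁, hw₂⟩ := hw
  simp only [mem_Ici] at hz₁ hz₂ hw₁ hw₂
  have hr₁' : 0 < 1 - r := sub_pos.2 hr₁
  have absorb : ∀ c x y : ℝ, 0 ≤ c → 0 ≤ x → 0 ≤ y →
      c • (x ^ (1 - r) * y ^ r) = (c * x) ^ (1 - r) * (c * y) ^ r := by
    intro c x y hc hx hy
    rw [Real.mul_rpow hc hx, Real.mul_rpow hc hy, smul_eq_mul,
      mul_mul_mul_comm, ← Real.rpow_add' hc (by norm_num), sub_add_cancel, Real.rpow_one]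
  have holder := Real.inner_le_Lp_mul_Lq_of_nonneg (s := Finset.univ)
    (f := ![(a * z.1) ^ (1 - r), (b * w.1) ^ (1 - r)]) (g := ![(a * z.2) ^ r, (b * w.2) ^ r])
    (Real.HolderConjugate.one_sub_inv_inv hr₀ hr₁)
    (by intro i _; fin_cases i <;> simp <;> positivity)
    (by intro i _; fin_cases i <;> simp <;> positivity)
  simp only [Fin.sum_univ_two, Matrix.cons_val_zero, Matrix.cons_val_one, one_div, inv_inv,
    Real.rpow_rpow_inv (mul_nonneg ha hz₁) hr₁'.ne',
    Real.rpow_rpow_inv (mul_nonneg hb hw₁) hr₁'.ne',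
    Real.rpow_rpow_inv (mul_nonneg ha hz₂) hr₀.ne', Real.rpow_rpow_inv (mul_nonneg hb hw₂) hr₀.ne']
    at holder
  rw [absorb a _ _ ha hz₁ hz₂, absorb b _ _ hb hw₁ hw₂]
  simpa only [Prod.fst_add, Prod.snd_add, Prod.smul_fst, Prod.smul_snd, smul_eq_mul] using holder

namespace UniformSum

def superlevel (φ : ℝ → ℝ) (s c : ℝ) : Set ℝ := {x ∈ Icc (-1 : ℝ) 1 | c < φ (s - x)}

noncomputable def superlevelLen (φ : ℝ → ℝ) (s c : ℝ) : ℝ := volume.real (superlevel φ s c)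

variable {φ : ℝ → ℝ} {s c M : ℝ}

lemma superlevel_subset_Icc : superlevel φ s c ⊆ Icc (-1) 1 := fun _ hx => hx.1

lemma superlevelLen_nonneg : 0 ≤ superlevelLen φ s c := measureReal_nonneg

lemma superlevelLen_le_two : superlevelLen φ s c ≤ 2 := by
  calc superlevelLen φ s c ≤ volume.real (Icc (-1 : ℝ) 1) :=
        measureReal_mono superlevel_subset_Icc measure_Icc_lt_top.ne
    _ = 2 := by norm_num [Real.volume_real_Icc]

lemma superlevelLen_antitone : Antitone (superlevelLen φ s) := fun _ _ h =>
  measureReal_mono (fun _ hx => ⟨hx.1, h.trans_lt hx.2⟩)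
    (measure_ne_top_of_subset superlevel_subset_Icc measure_Icc_lt_top.ne)

lemma mem_superlevel_of_le (hφ : Antitone φ) {x y : ℝ} (hx : x ∈ superlevel φ s c)
    (hxy : x ≤ y) (hy : y ≤ 1) : y ∈ superlevel φ s c :=
  ⟨⟨hx.1.1.trans hxy, hy⟩, hx.2.trans_le (hφ (by linarith))⟩

lemma superlevelLen_eq_zero (hφ : Antitone φ) (h : φ (s - 1) ≤ c) :
    superlevelLen φ s c = 0 := by
  have : superlevel φ s c = ∅ :=
    eq_empty_of_forall_notMem fun x hx => (hx.2.trans_le (hφ (by linarith [hx.1.2]))).not_ge h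
  simp [superlevelLen, this]

lemma Ioo_subset_superlevel (hφ : Antitone φ) :
    Ioo (1 - superlevelLen φ s c) 1 ⊆ superlevel φ s c := by
  intro y hy
  by_contra hyS
  have hsub : superlevel φ s c ⊆ Ioc y 1 := fun x hx =>
    ⟨lt_of_not_ge fun hxy => hyS (mem_superlevel_of_le hφ hx hxy hy.2.le), hx.1.2⟩
  have := measureReal_mono (μ := volume) hsub measure_Ioc_lt_top.ne
  rw [Real.volume_real_Ioc, max_eq_left (by linarith [hy.2])] at this
  exact (this.trans_lt (by linarith [hy.1] : 1 - y < superlevelLen φ s c)).false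

lemma sub_le_of_mem_superlevel (hzero : ∀ t, M ≤ t → φ t = 0) (hc : 0 ≤ c) {x : ℝ}
    (hx : x ∈ superlevel φ s c) : s - x ≤ M :=
  not_lt.1 fun h => (hx.2.trans_eq (hzero _ h.le)).not_ge hc

/-- The point at relative depth `θ` of the superlevel set, which is an interval ending at `1`;
when that interval is null the point is `1` itself, where only the non-strict bound holds. -/
lemma one_sub_mul_superlevelLen_spec (hφ : Antitone φ) (hzero : ∀ t, M ≤ t → φ t = 0)
    (hs : s ≤ M + 1) (hc : 0 ≤ c) (hcφ : c ≤ φ (s - 1)) {θ : ℝ} (hθ₀ : 0 ≤ θ) (hθ₁ : θ < 1) :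
    1 - θ * superlevelLen φ s c ∈ Icc (-1) 1 ∧ s - (1 - θ * superlevelLen φ s c) ≤ M ∧
      c ≤ φ (s - (1 - θ * superlevelLen φ s c)) ∧
      (0 < θ * superlevelLen φ s c → c < φ (s - (1 - θ * superlevelLen φ s c))) := by
  rcases (mul_nonneg hθ₀ superlevelLen_nonneg).eq_or_lt with h | h
  · rw [← h, sub_zero]
    exact ⟨right_mem_Icc.2 (by norm_num), by linarith, hcφ, fun h' => (h'.ne rfl).elim⟩
  · have hmem : 1 - θ * superlevelLen φ s c ∈ superlevel φ s c :=
      Ioo_subset_superlevel hφ ⟨by nlinarith [pos_of_mul_pos_right h hθ₀], by linarith⟩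
    exact ⟨hmem.1, sub_le_of_mem_superlevel hzero hc hmem, hmem.2.le, fun _ => hmem.2⟩

/-- One-dimensional Brunn–Minkowski: combining the points at the same relative depth of the two
superlevel sets lands, by concavity of `φ`, in the superlevel set at the combined level. -/
theorem superlevelLen_add_le (hφ : Antitone φ) (hconc : ConcaveOn ℝ (Iic M) φ)
    (hzero : ∀ t, M ≤ t → φ t = 0) {s₀ s₁ c₀ c₁ a b : ℝ} (hs₀ : s₀ ≤ M + 1) (hs₁ : s₁ ≤ M + 1)
    (hc₀ : 0 ≤ c₀) (hcφ₀ : c₀ ≤ φ (s₀ - 1)) (hc₁ : 0 ≤ c₁) (hcφ₁ : c₁ ≤ φ (s₁ - 1))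
    (ha : 0 ≤ a) (hb : 0 ≤ b) (hab : a + b = 1) :
    a * superlevelLen φ s₀ c₀ + b * superlevelLen φ s₁ c₁ ≤
      superlevelLen φ (a * s₀ + b * s₁) (a * c₀ + b * c₁) := by
  set ℓ₀ := superlevelLen φ s₀ c₀
  set ℓ₁ := superlevelLen φ s₁ c₁
  suffices hsub : Ioo (1 - (a * ℓ₀ + b * ℓ₁)) 1 ⊆
      superlevel φ (a * s₀ + b * s₁) (a * c₀ + b * c₁) by
    have := measureReal_mono (μ := volume) hsub
      (measure_ne_top_of_subset superlevel_subset_Icc measure_Icc_lt_top.ne)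
    rw [Real.volume_real_Ioo, sub_sub_cancel] at this
    exact (le_max_left _ _).trans this
  rintro y ⟨hy₁, hy₂⟩
  have hL : 0 < a * ℓ₀ + b * ℓ₁ := by linarith
  set θ := (1 - y) / (a * ℓ₀ + b * ℓ₁) with hθ
  have hθ₀ : 0 ≤ θ := div_nonneg (by linarith) hL.le
  have hθ₁ : θ < 1 := (div_lt_one hL).2 (by linarith)
  have hθL : a * (θ * ℓ₀) + b * (θ * ℓ₁) = 1 - y := by
    rw [hθ]; field_simp
  have hy : y = a * (1 - θ * ℓ₀) + b * (1 - θ * ℓ₁) := by linear_combination hθL - hab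
  obtain ⟨hI₀, hM₀, hle₀, hlt₀⟩ := one_sub_mul_superlevelLen_spec hφ hzero hs₀ hc₀ hcφ₀ hθ₀ hθ₁
  obtain ⟨hI₁, hM₁, hle₁, hlt₁⟩ := one_sub_mul_superlevelLen_spec hφ hzero hs₁ hc₁ hcφ₁ hθ₀ hθ₁
  refine ⟨hy ▸ convex_Icc (-1 : ℝ) 1 hI₀ hI₁ ha hb hab, ?_⟩
  have harg : a * s₀ + b * s₁ - y =
      a * (s₀ - (1 - θ * ℓ₀)) + b * (s₁ - (1 - θ * ℓ₁)) := by rw [hy]; ring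
  rw [harg]
  refine lt_of_lt_of_le ?_ (hconc.2 hM₀ hM₁ ha hb hab)
  rcases lt_or_ge 0 (a * (θ * ℓ₀)) with h | h
  · have := hlt₀ (pos_of_mul_pos_right h ha)
    have := pos_of_mul_pos_left h (mul_nonneg hθ₀ superlevelLen_nonneg)
    simp only [smul_eq_mul]; nlinarith
  · have h' : 0 < b * (θ * ℓ₁) := by linarith
    have := hlt₁ (pos_of_mul_pos_right h' hb)
    have := pos_of_mul_pos_left h' (mul_nonneg hθ₀ superlevelLen_nonneg)
    simp only [smul_eq_mul]; nlinarith

lemma integrableOn_superlevelLen_comp {g : ℝ → ℝ} (hg : Measurable g) {t : Set ℝ}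
    (ht : volume t ≠ ⊤) : IntegrableOn (fun c => superlevelLen φ s (g c)) t :=
  Measure.integrableOn_of_bounded ht
    (superlevelLen_antitone.measurable.comp hg).aestronglyMeasurable (ae_of_all _ fun _ => by
      rw [Real.norm_of_nonneg superlevelLen_nonneg]; exact superlevelLen_le_two)

variable {m : ℕ}

lemma integral_pow_eq_integral_superlevelLen (hm : m ≠ 0) (hφ₀ : 0 ≤ φ) (hφ : Antitone φ)
    (s : ℝ) :
    ∫ x in Icc (-1) 1, φ (s - x) ^ m = ∫ c in Ioi 0, superlevelLen φ s (c ^ (m : ℝ)⁻¹) := by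
  have hmono : Monotone fun x => φ (s - x) ^ m := fun x y h =>
    pow_le_pow_left₀ (hφ₀ _) (hφ (by linarith)) m
  rw [((hmono.monotoneOn _).integrableOn_isCompact isCompact_Icc).integral_eq_integral_meas_lt
    (ae_of_all _ fun x => pow_nonneg (hφ₀ _) m)]
  refine setIntegral_congr_fun measurableSet_Ioi fun c (hc : 0 < c) => ?_
  rw [measureReal_restrict_apply' measurableSet_Icc, superlevelLen, superlevel, inter_comm]
  congr 1 with x
  refine and_congr_right fun _ => ?_
  conv_lhs => rw [← Real.rpow_inv_natCast_pow hc.le hm]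
  exact pow_lt_pow_iff_left₀ (Real.rpow_nonneg hc.le _) (hφ₀ _) hm

lemma superlevelLen_rpow_eq_zero (hφ₀ : 0 ≤ φ) (hφ : Antitone φ) (hm : m ≠ 0) {c : ℝ}
    (hc : φ (s - 1) ^ m ≤ c) : superlevelLen φ s (c ^ (m : ℝ)⁻¹) = 0 := by
  refine superlevelLen_eq_zero hφ ?_
  rw [← Real.pow_rpow_inv_natCast (hφ₀ _) hm]
  exact Real.rpow_le_rpow (pow_nonneg (hφ₀ _) m) hc (by positivity)

lemma integrableOn_superlevelLen_rpow (hφ₀ : 0 ≤ φ) (hφ : Antitone φ) (hm : m ≠ 0) :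
    IntegrableOn (fun c => superlevelLen φ s (c ^ (m : ℝ)⁻¹)) (Ioi 0) := by
  rw [← Ioc_union_Ioi_eq_Ioi (pow_nonneg (hφ₀ (s - 1)) m)]
  exact (integrableOn_superlevelLen_comp (measurable_id.pow_const _)
    measure_Ioc_lt_top.ne).union (integrableOn_zero.congr_fun
      (fun c hc => (superlevelLen_rpow_eq_zero hφ₀ hφ hm (le_of_lt hc)).symm) measurableSet_Ioi)

/-- `β ^ m * levelIntegral m φ s β` is the layer-cake integral of `x ↦ φ (s - x) ^ m` over the
levels up to `β ^ m`, written with levels relative to `β`. -/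
noncomputable def levelIntegral (m : ℕ) (φ : ℝ → ℝ) (s β : ℝ) : ℝ :=
  ∫ c in (0 : ℝ)..1, superlevelLen φ s (β * c ^ (m : ℝ)⁻¹)

lemma intervalIntegrable_superlevelLen_comp {g : ℝ → ℝ} (hg : Measurable g) (a b : ℝ) :
    IntervalIntegrable (fun c => superlevelLen φ s (g c)) volume a b :=
  ⟨integrableOn_superlevelLen_comp hg measure_Ioc_lt_top.ne,
    integrableOn_superlevelLen_comp hg measure_Ioc_lt_top.ne⟩

lemma pow_mul_levelIntegral (hm : m ≠ 0) {β : ℝ} (hβ : 0 ≤ β) :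
    β ^ m * levelIntegral m φ s β =
      ∫ c in Ioc 0 (β ^ m), superlevelLen φ s (c ^ (m : ℝ)⁻¹) := by
  have hscale := intervalIntegral.smul_integral_comp_mul_left
    (fun c => superlevelLen φ s (c ^ (m : ℝ)⁻¹)) (β ^ m) (a := 0) (b := 1)
  rw [mul_zero, mul_one, intervalIntegral.integral_of_le (a := 0) (b := β ^ m) (by positivity)]
    at hscale
  rw [← hscale, smul_eq_mul, levelIntegral]
  refine congrArg _ (intervalIntegral.integral_congr fun c hc => ?_)
  have hc : 0 ≤ c := by simpa using hc.1
  rw [Real.mul_rpow (by positivity) hc, Real.pow_rpow_inv_natCast hβ hm]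

lemma pow_mul_levelIntegral_le (hφ₀ : 0 ≤ φ) (hφ : Antitone φ) (hm : m ≠ 0) {β : ℝ}
    (hβ : 0 ≤ β) : β ^ m * levelIntegral m φ s β ≤ ∫ x in Icc (-1) 1, φ (s - x) ^ m := by
  rw [pow_mul_levelIntegral hm hβ, integral_pow_eq_integral_superlevelLen hm hφ₀ hφ]
  exact setIntegral_mono_set (integrableOn_superlevelLen_rpow hφ₀ hφ hm)
    (ae_of_all _ fun _ => superlevelLen_nonneg) Ioc_subset_Ioi_self.eventuallyLE

lemma pow_mul_levelIntegral_self (hφ₀ : 0 ≤ φ) (hφ : Antitone φ) (hm : m ≠ 0) :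
    φ (s - 1) ^ m * levelIntegral m φ s (φ (s - 1)) = ∫ x in Icc (-1) 1, φ (s - x) ^ m := by
  rw [pow_mul_levelIntegral hm (hφ₀ _), integral_pow_eq_integral_superlevelLen hm hφ₀ hφ]
  refine (setIntegral_eq_of_subset_of_forall_sdiff_eq_zero measurableSet_Ioi
    Ioc_subset_Ioi_self fun c ⟨hc₀, hcR⟩ => superlevelLen_rpow_eq_zero hφ₀ hφ hm ?_).symm
  exact (not_le.1 fun h => hcR ⟨hc₀, h⟩).le

lemma levelIntegral_add_le (hφ₀ : 0 ≤ φ) (hφ : Antitone φ) (hconc : ConcaveOn ℝ (Iic M) φ)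
    (hzero : ∀ t, M ≤ t → φ t = 0) {s₀ s₁ a b : ℝ} (hs₀ : s₀ ≤ M + 1) (hs₁ : s₁ ≤ M + 1)
    (ha : 0 ≤ a) (hb : 0 ≤ b) (hab : a + b = 1) :
    a * levelIntegral m φ s₀ (φ (s₀ - 1)) + b * levelIntegral m φ s₁ (φ (s₁ - 1)) ≤
      levelIntegral m φ (a * s₀ + b * s₁) (a * φ (s₀ - 1) + b * φ (s₁ - 1)) := by
  have hii : ∀ s β : ℝ,
      IntervalIntegrable (fun c => superlevelLen φ s (β * c ^ (m : ℝ)⁻¹)) volume 0 1 :=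
    fun _ _ => intervalIntegrable_superlevelLen_comp
      (measurable_const.mul (measurable_id.pow_const _)) 0 1
  simp only [levelIntegral]
  rw [← intervalIntegral.integral_const_mul, ← intervalIntegral.integral_const_mul,
    ← intervalIntegral.integral_add ((hii _ _).const_mul a) ((hii _ _).const_mul b)]
  refine intervalIntegral.integral_mono_on zero_le_one
    (((hii _ _).const_mul a).add ((hii _ _).const_mul b)) (hii _ _) fun c hc => ?_
  have ht₀ : 0 ≤ c ^ (m : ℝ)⁻¹ := Real.rpow_nonneg hc.1 _
  have ht₁ : c ^ (m : ℝ)⁻¹ ≤ 1 := Real.rpow_le_one hc.1 hc.2 (by positivity)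
  have key := superlevelLen_add_le hφ hconc hzero hs₀ hs₁
    (mul_nonneg (hφ₀ _) ht₀) (mul_le_of_le_one_right (hφ₀ _) ht₁)
    (mul_nonneg (hφ₀ _) ht₀) (mul_le_of_le_one_right (hφ₀ _) ht₁) ha hb hab
  rwa [← mul_assoc, ← mul_assoc, ← add_mul] at key

lemma levelIntegral_nonneg {β : ℝ} : 0 ≤ levelIntegral m φ s β :=
  intervalIntegral.integral_nonneg zero_le_one fun _ _ => superlevelLen_nonneg

lemma pow_mul_rpow_inv_succ {x y : ℝ} (hx : 0 ≤ x) (hy : 0 ≤ y) :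
    (x ^ m * y) ^ ((m : ℝ) + 1)⁻¹ = x ^ (1 - ((m : ℝ) + 1)⁻¹) * y ^ ((m : ℝ) + 1)⁻¹ := by
  rw [Real.mul_rpow (by positivity) hy, ← Real.rpow_natCast, ← Real.rpow_mul hx]
  congr 2
  field_simp
  ring

theorem concaveOn_integral_pow_rpow (hm : m ≠ 0) (hφ : Antitone φ)
    (hconc : ConcaveOn ℝ (Iic M) φ) (hzero : ∀ t, M ≤ t → φ t = 0) :
    ConcaveOn ℝ (Iic (M + 1))
      fun s => (∫ x in Icc (-1) 1, φ (s - x) ^ m) ^ ((m : ℝ) + 1)⁻¹ := by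
  have hφ₀ : 0 ≤ φ := fun t => (le_total t M).elim
    (fun h => (hzero M le_rfl).symm.le.trans (hφ h)) fun h => (hzero t h).symm.le
  have hp₀ : (0 : ℝ) < ((m : ℝ) + 1)⁻¹ := by positivity
  have hp₁ : ((m : ℝ) + 1)⁻¹ < 1 := by
    have : (0 : ℝ) < m := by exact_mod_cast Nat.pos_of_ne_zero hm
    exact inv_lt_one_of_one_lt₀ (by linarith)
  refine ⟨convex_Iic _, fun s₀ hs₀ s₁ hs₁ a b ha hb hab => ?_⟩
  set β := a * φ (s₀ - 1) + b * φ (s₁ - 1)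
  have hβ : 0 ≤ β := add_nonneg (mul_nonneg ha (hφ₀ _)) (mul_nonneg hb (hφ₀ _))
  have hgeom := (concaveOn_rpow_one_sub_mul_rpow hp₀ hp₁).2
    (x := (φ (s₀ - 1), levelIntegral m φ s₀ (φ (s₀ - 1))))
    (y := (φ (s₁ - 1), levelIntegral m φ s₁ (φ (s₁ - 1))))
    ⟨hφ₀ _, levelIntegral_nonneg⟩ ⟨hφ₀ _, levelIntegral_nonneg⟩ ha hb hab
  simp only [smul_eq_mul, Prod.smul_mk, Prod.mk_add_mk] at hgeom ⊢
  rw [← pow_mul_levelIntegral_self hφ₀ hφ hm (s := s₀),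
    ← pow_mul_levelIntegral_self hφ₀ hφ hm (s := s₁),
    pow_mul_rpow_inv_succ (hφ₀ _) levelIntegral_nonneg,
    pow_mul_rpow_inv_succ (hφ₀ _) levelIntegral_nonneg]
  have hL :
      0 ≤ a * levelIntegral m φ s₀ (φ (s₀ - 1)) + b * levelIntegral m φ s₁ (φ (s₁ - 1)) :=
    add_nonneg (mul_nonneg ha levelIntegral_nonneg) (mul_nonneg hb levelIntegral_nonneg)
  calc _ ≤ _ := hgeom
    _ = (β ^ m * (a * levelIntegral m φ s₀ (φ (s₀ - 1)) +
          b * levelIntegral m φ s₁ (φ (s₁ - 1)))) ^ ((m : ℝ) + 1)⁻¹ :=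
        (pow_mul_rpow_inv_succ hβ hL).symm
    _ ≤ (β ^ m * levelIntegral m φ (a * s₀ + b * s₁) β) ^ ((m : ℝ) + 1)⁻¹ :=
        Real.rpow_le_rpow (mul_nonneg (pow_nonneg hβ m) hL) (mul_le_mul_of_nonneg_left
          (levelIntegral_add_le hφ₀ hφ hconc hzero hs₀ hs₁ ha hb hab) (pow_nonneg hβ m)) hp₀.le
    _ ≤ _ := Real.rpow_le_rpow (mul_nonneg (pow_nonneg hβ m) levelIntegral_nonneg)
        (pow_mul_levelIntegral_le hφ₀ hφ hm hβ) hp₀.le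

noncomputable abbrev unifIcc : Measure ℝ := (2 : ENNReal)⁻¹ • volume.restrict (Icc (-1 : ℝ) 1)

instance : IsProbabilityMeasure unifIcc := ⟨by
  rw [Measure.smul_apply, Measure.restrict_apply_univ, Real.volume_Icc, smul_eq_mul]
  norm_num [ENNReal.inv_mul_cancel]⟩

instance (n : ℕ) : IsProbabilityMeasure (unifCube n) := by
  unfold unifCube; infer_instance

noncomputable def sumTail (n : ℕ) (s : ℝ) : ℝ := (unifCube n).real {u | s < ∑ i, u i}

lemma sumTail_nonneg (n : ℕ) (s : ℝ) : 0 ≤ sumTail n s := measureReal_nonneg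

lemma sumTail_antitone (n : ℕ) : Antitone (sumTail n) := fun _ _ h =>
  measureReal_mono fun _ hu => h.trans_lt hu

lemma sumTail_zero (s : ℝ) : sumTail 0 s = (Iio 0).indicator 1 s := by
  by_cases h : s < 0 <;> simp [sumTail, unifCube, h]

lemma sumTail_succ (n : ℕ) (s : ℝ) :
    sumTail (n + 1) s = 2⁻¹ * ∫ x in Icc (-1) 1, sumTail n (s - x) := by
  have hS : MeasurableSet {p : ℝ × (Fin n → ℝ) | s - p.1 < ∑ i, p.2 i} :=
    measurableSet_lt (measurable_const.sub measurable_fst)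
      (Finset.measurable_sum _ fun i _ => (measurable_pi_apply i).comp measurable_snd)
  have hpre : {u : Fin (n + 1) → ℝ | s < ∑ i, u i} =
      MeasurableEquiv.piFinSuccAbove (fun _ => ℝ) 0 ⁻¹'
        {p : ℝ × (Fin n → ℝ) | s - p.1 < ∑ i, p.2 i} := by
    ext u
    simp [Fin.sum_univ_succ, sub_lt_iff_lt_add', Fin.tail]
  have hsplit : unifCube (n + 1) {u | s < ∑ i, u i} =
      ∫⁻ x, unifCube n {u | s - x < ∑ i, u i} ∂unifIcc := by
    rw [hpre, unifCube, (measurePreserving_piFinSuccAbove (fun _ => unifIcc) 0).measure_preimage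
      hS.nullMeasurableSet, Measure.prod_apply hS]
    rfl
  rw [sumTail, measureReal_def, hsplit, ← integral_toReal, integral_smul_measure]
  · simp [sumTail, measureReal_def]
  · refine (Monotone.measurable fun x y hxy => measure_mono fun u hu => ?_).aemeasurable
    exact (sub_le_sub_left hxy s).trans_lt hu
  · exact ae_of_all _ fun _ => measure_lt_top _ _

lemma sumTail_eq_zero {n : ℕ} {s : ℝ} (hs : (n : ℝ) ≤ s) : sumTail n s = 0 := by
  induction n generalizing s with
  | zero => simp [sumTail_zero, not_lt.2 (by simpa using hs : (0 : ℝ) ≤ s)]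
  | succ k ih =>
    rw [sumTail_succ, setIntegral_congr_fun measurableSet_Icc fun x hx => ih ?_]
    · simp
    · push_cast at hs; linarith [hx.2]

lemma sumTail_one {s : ℝ} (hs : s ≤ 1) : sumTail 1 s = 2⁻¹ * (1 - max s (-1)) := by
  have hind : EqOn (fun x => sumTail 0 (s - x)) ((Ioi s).indicator 1) (Ioc (-1) 1) :=
    fun x _ => by by_cases h : s < x <;> simp [sumTail_zero, h]
  have hset : Ioi s ∩ Ioc (-1 : ℝ) 1 = Ioc (max s (-1)) 1 := by
    ext x; simp only [mem_inter_iff, mem_Ioi, mem_Ioc, max_lt_iff, and_assoc]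
  rw [sumTail_succ, integral_Icc_eq_integral_Ioc, setIntegral_congr_fun measurableSet_Ioc hind,
    integral_indicator_one measurableSet_Ioi, measureReal_restrict_apply measurableSet_Ioi, hset,
    Real.volume_real_Ioc, max_eq_left (by simp [hs])]

lemma concaveOn_sumTail_one : ConcaveOn ℝ (Iic 1) (sumTail 1) := by
  have hmax : ConvexOn ℝ (Iic (1 : ℝ)) fun s => max s (-1) :=
    (convexOn_id (convex_Iic 1)).sup (convexOn_const (-1) (convex_Iic 1))
  refine (((concaveOn_const 1 (convex_Iic 1)).sub hmax).smul
    (by norm_num : (0 : ℝ) ≤ 2⁻¹)).congr fun s hs => ?_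
  simp [sumTail_one hs]

lemma integral_sumTail_rpow_pow {k : ℕ} (hk : k ≠ 0) (s : ℝ) :
    ∫ x in Icc (-1) 1, (sumTail k (s - x) ^ (k : ℝ)⁻¹) ^ k = 2 * sumTail (k + 1) s := by
  simp only [Real.rpow_inv_natCast_pow (sumTail_nonneg _ _) hk, sumTail_succ]
  ring

theorem concaveOn_sumTail_rpow {n : ℕ} (hn : 0 < n) :
    ConcaveOn ℝ (Iic (n : ℝ)) fun s => sumTail n s ^ (n : ℝ)⁻¹ := by
  induction n, hn using Nat.le_induction with
  | base => simpa using concaveOn_sumTail_one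
  | succ k hk ih =>
    have hk₀ : k ≠ 0 := Nat.one_le_iff_ne_zero.1 hk
    have hstep := concaveOn_integral_pow_rpow hk₀ (fun s t hst =>
      Real.rpow_le_rpow (sumTail_nonneg _ _) (sumTail_antitone k hst) (by positivity)) ih
      fun t ht => by simp [sumTail_eq_zero ht, hk₀]
    push_cast
    refine (hstep.smul (by positivity : (0 : ℝ) ≤ 2⁻¹ ^ ((k : ℝ) + 1)⁻¹)).congr fun s _ => ?_
    simp only [integral_sumTail_rpow_pow hk₀, smul_eq_mul]
    rw [← Real.mul_rpow (by norm_num) (by linarith [sumTail_nonneg (k + 1) s]),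
      inv_mul_cancel_left₀ two_ne_zero]

lemma tailP_eq_sumTail {n : ℕ} (hn : 0 < n) (t : ℝ) : tailP n t = sumTail n (n * t) := by
  have hset : {u : Fin n → ℝ | t < avgCoord n u} = {u | n * t < ∑ i, u i} := by
    ext u
    change t < (∑ i, u i) / n ↔ n * t < ∑ i, u i
    rw [lt_div_iff₀ (by exact_mod_cast hn), mul_comm]
  rw [tailP, hset]
  rfl

end UniformSum

/-- For the average `X` of `n` i.i.d. uniform random variables on `[-1,1]`, the
function `t ↦ P(X > t)^(1/n)` is concave on `[-1,1]`. -/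
theorem tailP_rpow_concaveOn (n : ℕ) (hn : 0 < n) :
    ConcaveOn ℝ (Icc (-1 : ℝ) 1) (fun t => tailP n t ^ ((1 : ℝ) / n)) := by
  have hscale := (UniformSum.concaveOn_sumTail_rpow hn).comp_linearMap
    (LinearMap.lsmul ℝ ℝ (n : ℝ))
  refine (hscale.subset (fun t ht => ?_) (convex_Icc _ _)).congr fun t _ => ?_
  · simpa using mul_le_of_le_one_right (Nat.cast_nonneg n) ht.2
  · simp [UniformSum.tailP_eq_sumTail hn, one_div]
end

section
/- Let U_1,...,U_n be independent uniform random variables on [-1,1] and X = (1/n)∑ U_i. Then for every t in [-1,1), P(X > t) ≤ (n(1-t)/2)^n / n! < (e(1-t)/2)^n. -/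
open MeasureTheory Set
open scoped ENNReal

noncomputable def uM : Measure ℝ := (2 : ENNReal)⁻¹ • volume.restrict (Icc (-1 : ℝ) 1)

instance : IsProbabilityMeasure uM := by
  constructor
  simp only [uM, Measure.smul_apply, Measure.restrict_apply MeasurableSet.univ, univ_inter,
    Real.volume_Icc, smul_eq_mul]
  norm_num
  rw [ENNReal.inv_mul_cancel] <;> norm_num

instance (n : ℕ) : IsProbabilityMeasure (unifCube n) :=
  inferInstanceAs (IsProbabilityMeasure (Measure.pi fun _ : Fin n => uM))

def goodA (n : ℕ) (s : ℝ) : Set (Fin n → ℝ) :=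
  {u | (∀ i, u i ≤ 1) ∧ (n : ℝ) - s < ∑ i, u i}

lemma measurableSet_goodA (n : ℕ) (s : ℝ) : MeasurableSet (goodA n s) := by
  have h1 : MeasurableSet {u : Fin n → ℝ | ∀ i, u i ≤ 1} := by
    rw [Set.setOf_forall]
    exact MeasurableSet.iInter fun i =>
      measurableSet_le (measurable_pi_apply i) measurable_const
  have h2 : MeasurableSet {u : Fin n → ℝ | (n : ℝ) - s < ∑ i, u i} :=
    measurableSet_lt measurable_const (Finset.univ.measurable_sum fun i _ => measurable_pi_apply i)
  exact h1.inter h2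

lemma goodA_empty {n : ℕ} {s : ℝ} (hs : s ≤ 0) : goodA n s = ∅ := by
  ext u
  simp only [goodA, mem_setOf_eq, mem_empty_iff_false, iff_false, not_and, not_lt]
  intro h
  calc ∑ i, u i ≤ ∑ _i : Fin n, (1 : ℝ) := Finset.sum_le_sum fun i _ => h i
    _ = n := by simp
    _ ≤ (n : ℝ) - s := by linarith

lemma goodA_bound : ∀ (n : ℕ) (s : ℝ), 0 < s →
    unifCube n (goodA n s) ≤ ENNReal.ofReal ((s / 2) ^ n / n.factorial) := by
  intro n
  induction n with
  | zero =>
    intro s hs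
    simp only [pow_zero, Nat.factorial_zero, Nat.cast_one, div_one, ENNReal.ofReal_one]
    exact prob_le_one
  | succ n ih =>
    intro s hs
    have hmeas : MeasurableSet (goodA (n+1) s) := measurableSet_goodA (n+1) s
    set e := MeasurableEquiv.piFinSuccAbove (fun _ : Fin (n+1) => ℝ) 0 with he
    have hmp := measurePreserving_piFinSuccAbove (fun _ : Fin (n+1) => uM) 0
    have h1 : unifCube (n+1) (goodA (n+1) s)
        = (uM.prod (Measure.pi fun _ : Fin n => uM)) (e.symm ⁻¹' goodA (n+1) s) := by
      rw [show unifCube (n+1) = Measure.pi fun _ : Fin (n+1) => uM from rfl]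
      exact ((hmp.symm e).measure_preimage hmeas.nullMeasurableSet).symm
    have hslice : ∀ x : ℝ, x ≤ 1 →
        (Prod.mk x ⁻¹' (e.symm ⁻¹' goodA (n+1) s)) = goodA n (s - 1 + x) := by
      intro x hx
      ext v
      simp only [mem_preimage, he, MeasurableEquiv.piFinSuccAbove_symm_apply,
        Fin.insertNth_zero', Fin.insertNthEquiv_zero, Fin.consEquiv_apply, goodA, mem_setOf_eq, Fin.forall_fin_succ, Fin.cons_zero,
        Fin.cons_succ, Fin.sum_cons]
      push_cast
      constructor
      · rintro ⟨⟨_, h1⟩, h2⟩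
        exact ⟨h1, by linarith⟩
      · rintro ⟨h1, h2⟩
        exact ⟨⟨hx, h1⟩, by linarith⟩
    have hprod : (uM.prod (Measure.pi fun _ : Fin n => uM)) (e.symm ⁻¹' goodA (n+1) s)
        = ∫⁻ x, (Measure.pi fun _ : Fin n => uM) (Prod.mk x ⁻¹' (e.symm ⁻¹' goodA (n+1) s)) ∂uM :=
      Measure.prod_apply (e.symm.measurable hmeas)
    have hsmul : (∫⁻ x, (Measure.pi fun _ : Fin n => uM) (Prod.mk x ⁻¹' (e.symm ⁻¹' goodA (n+1) s)) ∂uM)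
        = 2⁻¹ * ∫⁻ x in Icc (-1:ℝ) 1,
            (Measure.pi fun _ : Fin n => uM) (Prod.mk x ⁻¹' (e.symm ⁻¹' goodA (n+1) s)) :=
      lintegral_smul_measure _ _
    rw [h1, hprod, hsmul]
    set G : ℝ → ℝ≥0∞ := fun x => (Ioi (1-s)).indicator
        (fun x => ENNReal.ofReal (((s-1+x)/2)^n / n.factorial)) x with hG
    have hGmeas : Measurable G := by
      apply Measurable.indicator _ measurableSet_Ioi
      fun_prop
    have hbound : ∀ x ∈ Icc (-1:ℝ) 1,
        (Measure.pi fun _ : Fin n => uM) (Prod.mk x ⁻¹' (e.symm ⁻¹' goodA (n+1) s)) ≤ G x := by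
      intro x hx
      rw [hslice x hx.2]
      by_cases hxs : 1 - s < x
      · have h0 : 0 < s - 1 + x := by linarith
        have hih := ih (s - 1 + x) h0
        rw [hG]
        simp only [indicator_of_mem (mem_Ioi.mpr hxs)]
        exact hih
      · rw [goodA_empty (by linarith : s - 1 + x ≤ 0)]
        simp
    have step1 : (∫⁻ x in Icc (-1:ℝ) 1,
          (Measure.pi fun _ : Fin n => uM) (Prod.mk x ⁻¹' (e.symm ⁻¹' goodA (n+1) s)))
        ≤ ∫⁻ x in Icc (-1:ℝ) 1, G x := setLIntegral_mono hGmeas hbound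
    have step2 : (∫⁻ x in Icc (-1:ℝ) 1, G x)
        ≤ ∫⁻ x in Ioc (1-s) 1, ENNReal.ofReal (((s-1+x)/2)^n / n.factorial) := by
      rw [hG, lintegral_indicator measurableSet_Ioi, Measure.restrict_restrict measurableSet_Ioi]
      exact lintegral_mono_set fun x hx => ⟨hx.1, hx.2.2⟩
    refine le_trans (mul_le_mul_right (le_trans step1 step2) _) ?_
    have hint : IntegrableOn (fun x : ℝ => ((s-1+x)/2)^n / (n.factorial:ℝ)) (Ioc (1-s) 1) := by
      apply Continuous.integrableOn_Ioc
      fun_prop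
    have hnn : 0 ≤ᵐ[volume.restrict (Ioc (1-s) 1)]
        fun x : ℝ => ((s-1+x)/2)^n / (n.factorial:ℝ) := by
      refine (ae_restrict_iff' measurableSet_Ioc).mpr (ae_of_all _ fun x hx => ?_)
      have h2 : (0:ℝ) ≤ (s-1+x)/2 := by have := hx.1; linarith
      positivity
    rw [← ofReal_integral_eq_lintegral_ofReal hint hnn]
    have hreal : (∫ x in Ioc (1-s) 1, ((s-1+x)/2)^n / (n.factorial:ℝ))
        = 2 * ((s/2)^(n+1) / ((n+1).factorial:ℝ)) := by
      rw [← intervalIntegral.integral_of_le (by linarith : (1:ℝ)-s ≤ 1)]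
      have h1 : (∫ x in (1-s)..1, ((s-1+x)/2)^n / (n.factorial:ℝ))
          = ∫ x in (1-s)..1, (fun y : ℝ => (y/2)^n / (n.factorial:ℝ)) (x + (s-1)) := by
        congr 1
        ext x
        ring_nf
      rw [h1, intervalIntegral.integral_comp_add_right
        (fun y : ℝ => (y/2)^n / (n.factorial:ℝ)) (s-1),
        show (1:ℝ) - s + (s-1) = 0 by ring, show (1:ℝ) + (s-1) = s by ring]
      simp_rw [div_pow, div_div]
      rw [intervalIntegral.integral_div, integral_pow]
      rw [Nat.factorial_succ]
      push_cast
      rw [zero_pow (Nat.succ_ne_zero n)]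
      field_simp
      ring
    rw [hreal, ENNReal.ofReal_mul (by norm_num : (0:ℝ) ≤ 2), ENNReal.ofReal_ofNat,
      ← mul_assoc, ENNReal.inv_mul_cancel (by norm_num) (by norm_num), one_mul]

lemma unifCube_bad (n : ℕ) : unifCube n {u : Fin n → ℝ | ∃ i, 1 < u i} = 0 := by
  have h : {u : Fin n → ℝ | ∃ i, 1 < u i} = ⋃ i, Function.eval i ⁻¹' (Ioi (1:ℝ)) := by
    ext u; simp [Function.eval]
  rw [show unifCube n = Measure.pi fun _ : Fin n => uM from rfl, h]
  refine measure_iUnion_null fun i => Measure.pi_eval_preimage_null _ ?_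
  have : (Ioi (1:ℝ)) ∩ Icc (-1:ℝ) 1 = ∅ := by
    ext x; simp only [mem_inter_iff, mem_Ioi, mem_Icc, mem_empty_iff_false, iff_false, not_and]
    intro h1 h2
    simp only [not_le]
    linarith
  rw [show (uM : Measure ℝ) = (2 : ENNReal)⁻¹ • volume.restrict (Icc (-1 : ℝ) 1) from rfl,
    Measure.smul_apply, Measure.restrict_apply measurableSet_Ioi, this]
  simp

lemma pow_self_div_factorial_lt (n : ℕ) (hn : 0 < n) :
    (n:ℝ)^n / (n.factorial:ℝ) < Real.exp 1 ^ n := by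
  have hsum := Real.sum_le_exp_of_nonneg (by positivity : (0:ℝ) ≤ (n:ℝ)) (n+1)
  have hsub : ({0, n} : Finset ℕ) ⊆ Finset.range (n+1) := by
    intro i hi
    simp only [Finset.mem_insert, Finset.mem_singleton] at hi
    rcases hi with rfl | rfl <;> simp [Finset.mem_range]
  have hle : (∑ i ∈ ({0, n} : Finset ℕ), (n:ℝ)^i / i.factorial)
      ≤ ∑ i ∈ Finset.range (n+1), (n:ℝ)^i / i.factorial := by
    refine Finset.sum_le_sum_of_subset_of_nonneg hsub fun i _ _ => by positivity
  rw [Finset.sum_pair (by omega : 0 ≠ n)] at hle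
  simp only [pow_zero, Nat.factorial_zero, Nat.cast_one, div_one] at hle
  have hexp : Real.exp (n:ℝ) = Real.exp 1 ^ n := by
    rw [← Real.exp_nat_mul, mul_one]
  linarith [le_trans hle hsum, hexp ▸ le_trans hle hsum]

/-- For the average `X` of `n` i.i.d. uniform random variables on `[-1,1]` and every
`t ∈ [-1,1)`, `P(X > t) ≤ (n(1-t)/2)^n / n! < (e(1-t)/2)^n`. -/
theorem tailP_le_bound (n : ℕ) (hn : 0 < n) :
    ∀ t ∈ Ico (-1 : ℝ) 1,
      tailP n t ≤ ((n : ℝ) * (1 - t) / 2) ^ n / (n.factorial : ℝ) ∧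
      ((n : ℝ) * (1 - t) / 2) ^ n / (n.factorial : ℝ)
        < (Real.exp 1 * (1 - t) / 2) ^ n := by
  rintro t ⟨_ht1, ht2⟩
  have hc : (0:ℝ) < 1 - t := by linarith
  have hnn : (0:ℝ) < n := by exact_mod_cast hn
  set s : ℝ := n * (1 - t) with hs
  have hspos : 0 < s := by positivity
  constructor
  · have hsub : {u : Fin n → ℝ | t < avgCoord n u} ⊆ goodA n s ∪ {u | ∃ i, 1 < u i} := by
      intro u hu
      by_cases hb : ∃ i, 1 < u i
      · exact Or.inr hb
      · push_neg at hb
        refine Or.inl ⟨hb, ?_⟩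
        simp only [mem_setOf_eq, avgCoord] at hu
        have h2 : t * n < ∑ i, u i := (lt_div_iff₀ hnn).mp hu
        rw [hs]
        nlinarith
    have hle : unifCube n {u | t < avgCoord n u} ≤ ENNReal.ofReal ((s/2)^n / n.factorial) := by
      calc unifCube n {u | t < avgCoord n u} ≤ unifCube n (goodA n s ∪ {u | ∃ i, 1 < u i}) :=
            measure_mono hsub
        _ ≤ unifCube n (goodA n s) + unifCube n {u | ∃ i, 1 < u i} := measure_union_le _ _
        _ = unifCube n (goodA n s) := by rw [unifCube_bad, add_zero]
        _ ≤ _ := goodA_bound n s hspos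
    have h3 := ENNReal.toReal_mono ENNReal.ofReal_ne_top hle
    rw [ENNReal.toReal_ofReal (by positivity)] at h3
    calc tailP n t ≤ (s/2)^n / n.factorial := h3
      _ = ((n:ℝ)*(1-t)/2)^n / n.factorial := by rw [hs]
  · have key := pow_self_div_factorial_lt n hn
    have hcp : (0:ℝ) < ((1-t)/2)^n := by positivity
    calc ((n:ℝ)*(1-t)/2)^n / n.factorial
        = ((n:ℝ)^n / n.factorial) * ((1-t)/2)^n := by
          rw [mul_div_assoc, mul_pow]; ring
      _ < Real.exp 1 ^ n * ((1-t)/2)^n := mul_lt_mul_of_pos_right key hcp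
      _ = (Real.exp 1 * (1-t)/2)^n := by rw [mul_div_assoc, mul_pow]
end

section
/- Let U_1,...,U_n be independent uniform random variables on [-1,1] and X = (1/n)∑ U_i. Then for every t in (-1,1), P(X > t)^{1/n} < sqrt(1 - m_X(t)^2), where m_X(t) = E[X | X > t]. -/
open MeasureTheory Set

/-!
Chernoff's bound, applied on the event `{X > t}` only: with `m = E[X | X > t]`, convexity of
`exp` gives `e^{c m} P(X > t) ≤ E[e^{c X}; X > t] < E[e^{c X}] = (sinh l / l)^n` for `c = n l`.
So `P(X > t)^{1/n} < e^{-l m} sinh l / l` for every `l > 0`, and `l = 3m` (using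
`sinh l ≤ l e^{l²/6}`) or `l = 1/(1-m)` makes the right side at most `√(1 - m²)`. The bounds
`0 < m < 1` come from `E[X] = 0 < E[X | X > t]` and `|X| < 1` almost surely.
-/

open Real
open scoped Nat

theorem Nat.factorial_mul_six_pow_le_factorial_two_mul_add_one (n : ℕ) :
    n ! * 6 ^ n ≤ (2 * n + 1)! := by
  induction n with
  | zero => simp
  | succ n ih =>
    calc (n + 1)! * 6 ^ (n + 1) = (6 * (n + 1)) * (n ! * 6 ^ n) := by
          rw [Nat.factorial_succ]; ring
      _ ≤ ((2 * n + 3) * (2 * n + 2)) * (2 * n + 1)! := Nat.mul_le_mul (by nlinarith) ih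
      _ = (2 * (n + 1) + 1)! := by
          rw [show 2 * (n + 1) + 1 = 2 * n + 2 + 1 by ring, Nat.factorial_succ (2 * n + 2),
            Nat.factorial_succ (2 * n + 1)]
          ring

theorem Real.sinh_le_mul_exp_sq_div_six {x : ℝ} (hx : 0 ≤ x) :
    sinh x ≤ x * exp (x ^ 2 / 6) := by
  rw [sinh_eq_tsum, exp_eq_exp_ℝ, NormedSpace.exp_eq_tsum ℝ, ← tsum_mul_left]
  refine x.hasSum_sinh.summable.tsum_le_tsum (fun i ↦ ?_)
    ((NormedSpace.expSeries_summable' (x ^ 2 / 6)).mul_left x)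
  simp only [div_pow, ← pow_mul, smul_eq_mul, inv_mul_eq_div, div_div, mul_div_assoc',
    ← pow_succ']
  gcongr
  exact_mod_cast Nat.factorial_mul_six_pow_le_factorial_two_mul_add_one i

theorem Real.exists_sinh_mul_exp_neg_le {m : ℝ} (hm0 : 0 < m) (hm1 : m < 1) :
    ∃ l, 0 < l ∧ sinh l * exp (-(l * m)) ≤ l * √(1 - m ^ 2) := by
  rcases le_or_gt m (1 / 2) with hm | hm
  · refine ⟨3 * m, by positivity, ?_⟩
    have hexp : exp (-(3 * m ^ 2)) ≤ 1 - m ^ 2 := by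
      rw [exp_neg, inv_le_iff_one_le_mul₀ (exp_pos _)]
      nlinarith [mul_le_mul_of_nonneg_left (add_one_le_exp (3 * m ^ 2))
        (by nlinarith : 0 ≤ 1 - m ^ 2),
        mul_nonneg (sq_nonneg m) (by nlinarith : 0 ≤ 2 - 3 * m ^ 2)]
    calc sinh (3 * m) * exp (-(3 * m * m))
        ≤ 3 * m * exp ((3 * m) ^ 2 / 6) * exp (-(3 * m * m)) := by
          gcongr; exact sinh_le_mul_exp_sq_div_six (by positivity)
      _ = 3 * m * √(exp (-(3 * m ^ 2))) := by
          rw [mul_assoc, ← exp_add, ← exp_half]; ring_nf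
      _ ≤ 3 * m * √(1 - m ^ 2) := by gcongr
  · refine ⟨1 / (1 - m), by bound, ?_⟩
    have h1m : 0 < 1 - m := by linarith
    have he : exp 1 ^ 2 < 9 := by nlinarith [exp_one_lt_d9, exp_pos 1]
    calc sinh (1 / (1 - m)) * exp (-(1 / (1 - m) * m))
        ≤ exp (1 / (1 - m)) / 2 * exp (-(1 / (1 - m) * m)) := by
          gcongr; rw [sinh_eq]; linarith [exp_pos (-(1 / (1 - m)))]
      _ = 1 / (1 - m) * (exp 1 * (1 - m) / 2) := by
          rw [div_mul_eq_mul_div, ← exp_add, show 1 / (1 - m) + -(1 / (1 - m) * m) = 1 by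
            field_simp; ring]
          field_simp
      _ ≤ 1 / (1 - m) * √(1 - m ^ 2) := by
          gcongr
          apply le_sqrt_of_sq_le
          nlinarith [mul_le_mul_of_nonneg_right he.le (sq_nonneg (1 - m))]

section Average

variable {Ω : Type*} [MeasurableSpace Ω] {μ : Measure Ω} {X : Ω → ℝ}

theorem MeasureTheory.integral_pos_of_ae_pos [NeZero μ] (hX : Integrable X μ)
    (hpos : ∀ᵐ ω ∂μ, 0 < X ω) : 0 < ∫ ω, X ω ∂μ := by
  rw [integral_pos_iff_support_of_nonneg_ae (hpos.mono fun _ h ↦ h.le) hX]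
  exact (Measure.measure_univ_pos.2 (NeZero.ne μ)).trans_le
    (measure_mono_ae (hpos.mono fun _ h _ ↦ h.ne'))

theorem MeasureTheory.setAverage_lt_of_ae_lt [IsFiniteMeasure μ] {s : Set Ω} {b : ℝ}
    (hX : IntegrableOn X s μ) (hs : μ s ≠ 0) (hb : ∀ᵐ ω ∂μ, X ω < b) :
    ⨍ ω in s, X ω ∂μ < b := by
  have : NeZero (μ.restrict s) := ⟨by rwa [Ne, Measure.restrict_eq_zero]⟩
  have hgap : 0 < ∫ ω in s, (b - X ω) ∂μ :=
    integral_pos_of_ae_pos ((integrable_const b).sub hX)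
      (ae_restrict_of_ae (hb.mono fun _ h ↦ sub_pos.2 h))
  have hpos : 0 < μ.real s := ENNReal.toReal_pos hs (measure_ne_top μ s)
  rw [integral_sub (integrable_const b) hX, setIntegral_const, smul_eq_mul,
    ← measure_smul_setAverage X (measure_ne_top μ s), smul_eq_mul] at hgap
  nlinarith

theorem MeasureTheory.integral_lt_setAverage_of_lt [IsProbabilityMeasure μ] (hXm : Measurable X)
    (hX : Integrable X μ) {t : ℝ} (hA : μ {ω | t < X ω} ≠ 0)
    (hAc : μ {ω | t < X ω}ᶜ ≠ 0) :
    ∫ ω, X ω ∂μ < ⨍ ω in {ω | t < X ω}, X ω ∂μ := by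
  set A := {ω | t < X ω}
  have hAm : MeasurableSet A := measurableSet_lt measurable_const hXm
  have : NeZero (μ.restrict A) := ⟨by rwa [Ne, Measure.restrict_eq_zero]⟩
  have hmean := measure_smul_setAverage X (measure_ne_top μ A)
  have hp : 0 < 1 - μ.real A := by
    rw [← probReal_compl_eq_one_sub hAm]; exact ENNReal.toReal_pos hAc (measure_ne_top μ _)
  have habove : 0 < ∫ ω in A, (X ω - t) ∂μ :=
    integral_pos_of_ae_pos (hX.integrableOn.sub (integrable_const t))
      ((ae_restrict_mem hAm).mono fun _ h ↦ sub_pos.2 h)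
  have hbelow : ∫ ω in Aᶜ, X ω ∂μ ≤ ∫ ω in Aᶜ, t ∂μ :=
    setIntegral_mono_on hX.integrableOn (integrable_const t) hAm.compl fun _ h ↦ not_lt.1 h
  rw [integral_sub hX.integrableOn (integrable_const t), setIntegral_const, ← hmean] at habove
  rw [setIntegral_const, probReal_compl_eq_one_sub hAm] at hbelow
  rw [← integral_add_compl hAm hX, ← hmean]
  simp only [smul_eq_mul] at habove hbelow ⊢
  have hmt : t < ⨍ ω in A, X ω ∂μ := lt_of_mul_lt_mul_left (by linarith) measureReal_nonneg
  nlinarith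

theorem MeasureTheory.exp_mul_setAverage_mul_lt_integral_exp [IsFiniteMeasure μ] (c : ℝ)
    (hX : Integrable X μ) (hexp : Integrable (fun ω ↦ exp (c * X ω)) μ) {A : Set Ω}
    (hA : MeasurableSet A) (hAc : μ Aᶜ ≠ 0) :
    exp (c * ⨍ ω in A, X ω ∂μ) * μ.real A < ∫ ω, exp (c * X ω) ∂μ := by
  set m := ⨍ ω in A, X ω ∂μ
  have : NeZero (μ.restrict Aᶜ) := ⟨by rwa [Ne, Measure.restrict_eq_zero]⟩
  have htangent : ∀ ω, exp (c * m) * (1 - c * m) + exp (c * m) * c * X ω ≤ exp (c * X ω) :=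
    fun ω ↦ by
      have := add_one_le_exp (c * X ω - c * m)
      rw [show c * X ω = c * m + (c * X ω - c * m) by ring, exp_add]
      nlinarith [exp_pos (c * m)]
  have hline : IntegrableOn (fun ω ↦ exp (c * m) * (1 - c * m) + exp (c * m) * c * X ω) A μ :=
    (integrable_const _).add (hX.integrableOn.const_mul _)
  have hA_le : exp (c * m) * μ.real A ≤ ∫ ω in A, exp (c * X ω) ∂μ := by
    refine le_of_eq_of_le ?_ (setIntegral_mono hline hexp.integrableOn htangent)
    rw [integral_add (integrable_const _) (hX.integrableOn.const_mul _), setIntegral_const,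
      integral_const_mul, ← measure_smul_setAverage X (measure_ne_top μ A)]
    simp only [smul_eq_mul]
    ring
  have hAc_pos : 0 < ∫ ω in Aᶜ, exp (c * X ω) ∂μ := integral_exp_pos hexp.integrableOn
  rw [← integral_add_compl hA hexp]
  linarith

end Average

noncomputable abbrev unifIcc : Measure ℝ :=
  (2 : ENNReal)⁻¹ • volume.restrict (Icc (-1 : ℝ) 1)

theorem unifCube_eq_pi (n : ℕ) : unifCube n = Measure.pi fun _ ↦ unifIcc := rfl

instance : IsProbabilityMeasure unifIcc := by
  constructor
  rw [unifIcc, Measure.smul_apply, Measure.restrict_apply_univ, Real.volume_Icc, smul_eq_mul]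
  norm_num [ENNReal.inv_mul_cancel]

instance inst_s12 (n : ℕ) : IsProbabilityMeasure (unifCube n) := by
  rw [unifCube_eq_pi]; infer_instance

theorem unifIcc_Ioo {a b : ℝ} (ha : -1 ≤ a) (hb : b ≤ 1) :
    unifIcc (Ioo a b) = ENNReal.ofReal ((b - a) / 2) := by
  rw [unifIcc, Measure.smul_apply, Measure.restrict_apply measurableSet_Ioo,
    inter_eq_left.2 (Ioo_subset_Icc_self.trans (Icc_subset_Icc ha hb)), Real.volume_Ioo,
    ENNReal.ofReal_div_of_pos two_pos, smul_eq_mul, ENNReal.ofReal_ofNat, ENNReal.div_eq_inv_mul]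

theorem integral_unifIcc_id : ∫ x, x ∂unifIcc = 0 := by
  rw [unifIcc, integral_smul_measure, integral_Icc_eq_integral_Ioc,
    ← intervalIntegral.integral_of_le (by norm_num), integral_id]
  norm_num

theorem integral_exp_mul_unifIcc {l : ℝ} (hl : l ≠ 0) :
    ∫ x, exp (l * x) ∂unifIcc = sinh l / l := by
  rw [unifIcc, integral_smul_measure, integral_Icc_eq_integral_Ioc,
    ← intervalIntegral.integral_of_le (by norm_num),
    intervalIntegral.integral_comp_mul_left (fun x ↦ exp x) hl, integral_exp, sinh_eq]
  simp only [mul_one, mul_neg_one, smul_eq_mul, ENNReal.toReal_inv, ENNReal.toReal_ofNat]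
  field_simp

theorem ae_mem_Ioo_unifCube (n : ℕ) :
    ∀ᵐ u ∂unifCube n, ∀ i, u i ∈ Ioo (-1 : ℝ) 1 := by
  have hIoo : ∀ᵐ x ∂unifIcc, x ∈ Ioo (-1 : ℝ) 1 := by
    rw [ae_iff, ← compl_def, prob_compl_eq_zero_iff measurableSet_Ioo, unifIcc_Ioo le_rfl le_rfl]
    norm_num
  rw [unifCube_eq_pi]
  exact ae_all_iff.2 fun i ↦ Measure.tendsto_eval_ae_ae.eventually hIoo

theorem measurable_avgCoord (n : ℕ) : Measurable (avgCoord n) := by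
  unfold avgCoord; fun_prop

theorem avgCoord_mem_Ioo {n : ℕ} (hn : 0 < n) {u : Fin n → ℝ} {a b : ℝ}
    (hu : ∀ i, u i ∈ Ioo a b) : avgCoord n u ∈ Ioo a b := by
  have : Nonempty (Fin n) := ⟨⟨0, hn⟩⟩
  have hn' : (0 : ℝ) < n := Nat.cast_pos.2 hn
  have hconst (c : ℝ) : ∑ _i : Fin n, c = n * c := by simp
  rw [avgCoord, mem_Ioo, lt_div_iff₀ hn', div_lt_iff₀ hn', mul_comm a, mul_comm b, ← hconst,
    ← hconst]
  exact ⟨Finset.sum_lt_sum_of_nonempty Finset.univ_nonempty fun i _ ↦ (hu i).1,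
    Finset.sum_lt_sum_of_nonempty Finset.univ_nonempty fun i _ ↦ (hu i).2⟩

theorem ae_avgCoord_mem_Ioo {n : ℕ} (hn : 0 < n) :
    ∀ᵐ u ∂unifCube n, avgCoord n u ∈ Ioo (-1 : ℝ) 1 :=
  (ae_mem_Ioo_unifCube n).mono fun _ ↦ avgCoord_mem_Ioo hn

theorem unifCube_avgCoord_mem_Ioo_ne_zero {n : ℕ} (hn : 0 < n) {a b : ℝ} (ha : -1 ≤ a)
    (hab : a < b) (hb : b ≤ 1) : unifCube n {u | avgCoord n u ∈ Ioo a b} ≠ 0 := by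
  have hbox : unifCube n (univ.pi fun _ ↦ Ioo a b) ≠ 0 := by
    rw [unifCube_eq_pi, Measure.pi_pi, unifIcc_Ioo ha hb, Finset.prod_const]
    exact pow_ne_zero _ (ENNReal.ofReal_pos.2 (by linarith)).ne'
  exact measure_mono_null (fun u (hu : u ∈ univ.pi fun _ ↦ Ioo a b) ↦
    avgCoord_mem_Ioo hn fun i ↦ hu i (mem_univ i)) |>.mt hbox

theorem integrable_avgCoord {n : ℕ} (hn : 0 < n) : Integrable (avgCoord n) (unifCube n) :=
  .of_bound (measurable_avgCoord n).aestronglyMeasurable 1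
    ((ae_avgCoord_mem_Ioo hn).mono fun _ h ↦ abs_le.2 ⟨h.1.le, h.2.le⟩)

theorem integrable_exp_mul_avgCoord {n : ℕ} (hn : 0 < n) (c : ℝ) :
    Integrable (fun u ↦ exp (c * avgCoord n u)) (unifCube n) :=
  .of_bound ((measurable_avgCoord n).const_mul c).exp.aestronglyMeasurable (exp |c|)
    ((ae_avgCoord_mem_Ioo hn).mono fun u h ↦ by
      rw [norm_of_nonneg (exp_pos _).le, exp_le_exp]
      calc c * avgCoord n u ≤ |c| * |avgCoord n u| := (le_abs_self _).trans (abs_mul _ _).le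
        _ ≤ |c| := mul_le_of_le_one_right (abs_nonneg c) (abs_le.2 ⟨h.1.le, h.2.le⟩))

theorem integral_avgCoord (n : ℕ) : ∫ u, avgCoord n u ∂unifCube n = 0 := by
  have hIcc : IntegrableOn id (Icc (-1 : ℝ) 1) volume := continuous_id.integrableOn_Icc
  have hint : Integrable id unifIcc := hIcc.smul_measure (by simp)
  simp only [avgCoord]
  rw [integral_div, unifCube_eq_pi,
    integral_finsetSum _ (f := fun i (u : Fin n → ℝ) ↦ u i) fun i _ ↦ integrable_eval hint]
  simp only [integral_eval, integral_unifIcc_id, Finset.sum_const_zero, zero_div]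

theorem integral_exp_mul_avgCoord {n : ℕ} (hn : 0 < n) {l : ℝ} (hl : l ≠ 0) :
    ∫ u, exp (n * l * avgCoord n u) ∂unifCube n = (sinh l / l) ^ n := by
  have hprod (u : Fin n → ℝ) : exp (n * l * avgCoord n u) = ∏ i, exp (l * u i) := by
    rw [← exp_sum, ← Finset.mul_sum, avgCoord]
    field_simp
  simp_rw [hprod]
  rw [unifCube_eq_pi, integral_fintype_prod_eq_pow (fun x ↦ exp (l * x)),
    integral_exp_mul_unifIcc hl, Fintype.card_fin]

theorem truncMean_eq_setAverage (n : ℕ) (t : ℝ) :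
    truncMean n t = ⨍ u in {u | t < avgCoord n u}, avgCoord n u ∂unifCube n := by
  rw [truncMean, tailP, setAverage_eq, smul_eq_mul, div_eq_inv_mul, measureReal_def]

theorem unifCube_tail_ne_zero_and_compl_ne_zero {n : ℕ} (hn : 0 < n) {t : ℝ}
    (ht : t ∈ Ioo (-1 : ℝ) 1) :
    unifCube n {u | t < avgCoord n u} ≠ 0 ∧ unifCube n {u | t < avgCoord n u}ᶜ ≠ 0 :=
  ⟨measure_mono_null (fun _ h ↦ h.1) |>.mt
      (unifCube_avgCoord_mem_Ioo_ne_zero hn ht.1.le ht.2 le_rfl),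
    measure_mono_null (fun u (h : avgCoord n u ∈ Ioo (-1) t) ↦ not_lt.2 h.2.le) |>.mt
      (unifCube_avgCoord_mem_Ioo_ne_zero hn le_rfl ht.1 ht.2.le)⟩

theorem truncMean_mem_Ioo {n : ℕ} (hn : 0 < n) {t : ℝ} (ht : t ∈ Ioo (-1 : ℝ) 1) :
    truncMean n t ∈ Ioo 0 1 := by
  obtain ⟨hA, hAc⟩ := unifCube_tail_ne_zero_and_compl_ne_zero hn ht
  rw [truncMean_eq_setAverage]
  refine ⟨?_, setAverage_lt_of_ae_lt (integrable_avgCoord hn).integrableOn hA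
    ((ae_avgCoord_mem_Ioo hn).mono fun _ h ↦ h.2)⟩
  simpa [integral_avgCoord] using
    integral_lt_setAverage_of_lt (measurable_avgCoord n) (integrable_avgCoord hn) hA hAc

theorem tailP_lt_pow {n : ℕ} (hn : 0 < n) {t : ℝ} (ht : t ∈ Ioo (-1 : ℝ) 1) {l : ℝ}
    (hl : 0 < l) : tailP n t < (sinh l / l * exp (-(l * truncMean n t))) ^ n := by
  have hchernoff := exp_mul_setAverage_mul_lt_integral_exp (n * l) (integrable_avgCoord hn)
    (integrable_exp_mul_avgCoord hn _) (measurableSet_lt measurable_const (measurable_avgCoord n))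
    (unifCube_tail_ne_zero_and_compl_ne_zero hn ht).2
  rw [integral_exp_mul_avgCoord hn hl.ne', ← truncMean_eq_setAverage] at hchernoff
  have hpow : exp (-(l * truncMean n t)) ^ n = (exp (n * l * truncMean n t))⁻¹ := by
    rw [← exp_nat_mul, ← exp_neg]; ring_nf
  rw [mul_pow, hpow, ← div_eq_mul_inv, lt_div_iff₀ (exp_pos _), mul_comm]
  exact hchernoff

/-- For the average `X` of `n` i.i.d. uniform random variables on `[-1,1]` and every
`t ∈ (-1,1)`, `P(X > t)^(1/n) < √(1 - m_X(t)²)`. -/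
theorem tailP_rpow_lt_sqrt (n : ℕ) (hn : 0 < n) :
    ∀ t ∈ Ioo (-1 : ℝ) 1,
      tailP n t ^ ((1 : ℝ) / n) < Real.sqrt (1 - truncMean n t ^ 2) := by
  intro t ht
  obtain ⟨hm0, hm1⟩ := truncMean_mem_Ioo hn ht
  obtain ⟨l, hl, hsinh⟩ := exists_sinh_mul_exp_neg_le hm0 hm1
  have hbase : sinh l / l * exp (-(l * truncMean n t)) ≤ √(1 - truncMean n t ^ 2) := by
    rw [div_mul_eq_mul_div, div_le_iff₀ hl, mul_comm _ l]
    exact hsinh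
  have htail : tailP n t < √(1 - truncMean n t ^ 2) ^ n :=
    (tailP_lt_pow hn ht hl).trans_le (pow_le_pow_left₀ (by positivity) hbase n)
  calc tailP n t ^ ((1 : ℝ) / n) < (√(1 - truncMean n t ^ 2) ^ n) ^ ((1 : ℝ) / n) :=
        rpow_lt_rpow ENNReal.toReal_nonneg htail (by positivity)
    _ = √(1 - truncMean n t ^ 2) := by rw [one_div, pow_rpow_inv_natCast (sqrt_nonneg _) hn.ne']
end

section
/- Let μ be a finite absolutely continuous Borel measure on ℝ^n, let H be the halfspace {x : ⟨x,θ⟩ ≤ c} for a unit vector θ and c ∈ ℝ, with μ(H) > 0. Then for every Borel set A ⊆ ℝ^n with μ(A) > 0 and b_{μ,θ}(A) = b_{μ,θ}(H), one has μ(A) ≤ μ(H), with equality only if μ(H △ A) = 0. -/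
open MeasureTheory Set RealInnerProductSpace

/-! With `g x = c - ⟪x, θ⟫`, which is `≥ 0` on `H` and `< 0` off `H`, the common barycenter
`b` gives `∫_S g = μ(S) (c - b)` for `S = A, H`. Among all sets, `H` maximizes `∫ g`, and a set
attaining the maximum is a.e. contained in `H`. Since `∫_H g ≥ 0` forces `c - b ≥ 0`, either
`μ(A) (c - b) < μ(H) (c - b)`, whence `μ(A) < μ(H)`, or `A ⊆ H` a.e., whence the claim. -/

section Bathtub

variable {α : Type*} [MeasurableSpace α] {μ : Measure α} {g : α → ℝ} {s : Set α}

lemma measure_eq_zero_of_setIntegral_eq_zero_of_neg (hs : MeasurableSet s)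
    (hgs : IntegrableOn g s μ) (hneg : ∀ x ∈ s, g x < 0) (h : ∫ x in s, g x ∂μ = 0) :
    μ s = 0 := by
  have hsupp : Function.support (-g) ∩ s = s :=
    inter_eq_self_of_subset_right fun x hx => neg_ne_zero.mpr (hneg x hx).ne
  have hnonneg : 0 ≤ᵐ[μ.restrict s] -g :=
    (ae_restrict_iff' hs).2 (ae_of_all _ fun x hx => neg_nonneg.mpr (hneg x hx).le)
  have hnot : ¬ 0 < μ (Function.support (-g) ∩ s) := by
    rw [← setIntegral_pos_iff_support_of_nonneg_ae hnonneg hgs.neg]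
    simp only [Pi.neg_apply, integral_neg, h, neg_zero, lt_irrefl, not_false_eq_true]
  rwa [hsupp, not_lt, nonpos_iff_eq_zero] at hnot

variable {A H : Set α}

lemma setIntegral_le_setIntegral_of_nonneg_of_neg (hg : Integrable g μ) (hA : MeasurableSet A)
    (hH : MeasurableSet H) (hpos : ∀ x ∈ H, 0 ≤ g x) (hneg : ∀ x ∉ H, g x < 0) :
    ∫ x in A, g x ∂μ ≤ ∫ x in H, g x ∂μ ∧
      (∫ x in A, g x ∂μ = ∫ x in H, g x ∂μ → μ (A \ H) = 0) := by
  have hAH : ∫ x in A \ H, g x ∂μ ≤ 0 :=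
    setIntegral_nonpos (hA.diff hH) fun x hx => (hneg x hx.2).le
  have hHA : 0 ≤ ∫ x in H \ A, g x ∂μ :=
    setIntegral_nonneg (hH.diff hA) fun x hx => hpos x hx.1
  have hAsplit := integral_inter_add_sdiff hH (hg.integrableOn (s := A))
  have hHsplit := integral_inter_add_sdiff hA (hg.integrableOn (s := H))
  rw [inter_comm] at hHsplit
  refine ⟨by linarith, fun heq => ?_⟩
  exact measure_eq_zero_of_setIntegral_eq_zero_of_neg (hA.diff hH) hg.integrableOn
    (fun x hx => hneg x hx.2) (by linarith)

lemma measure_le_and_symmDiff_eq_zero_of_diff_eq_zero (hA : MeasurableSet A) (hH : μ H ≠ ⊤)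
    (h : μ (A \ H) = 0) :
    μ A ≤ μ H ∧ (μ A = μ H → μ (symmDiff H A) = 0) := by
  have hsub : A ≤ᵐ[μ] H := ae_le_set.mpr h
  refine ⟨measure_mono_ae hsub, fun heq => ?_⟩
  rw [measure_symmDiff_eq_zero_iff]
  exact (ae_eq_of_ae_subset_of_measure_ge hsub heq.ge hA.nullMeasurableSet hH).symm

lemma setIntegral_const_sub_eq_measureReal_mul (hs : μ s ≠ ⊤)
    (hg : IntegrableOn g s μ) (c : ℝ) :
    ∫ x in s, (c - g x) ∂μ = μ.real s * (c - ⨍ x in s, g x ∂μ) := by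
  rw [integral_sub (integrableOn_const (C := c) hs) hg, setIntegral_const,
    ← measure_smul_setAverage g hs]
  simp only [smul_eq_mul]
  ring

end Bathtub

lemma integrable_inner_const_of_integrable_norm {E : Type*} [NormedAddCommGroup E]
    [InnerProductSpace ℝ E] [MeasurableSpace E] [OpensMeasurableSpace E]
    [SecondCountableTopology E] {μ : Measure E} (hmom : Integrable (fun x => ‖x‖) μ)
    (θ : E) :
    Integrable (fun x => ⟪x, θ⟫) μ :=
  ((integrable_norm_iff aestronglyMeasurable_id).mp hmom).inner_const θ

theorem halfspace_maximizer_general (n : ℕ) (μ : Measure (EuclideanSpace ℝ (Fin n)))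
    [IsFiniteMeasure μ]
    (hmom : Integrable (fun x => ‖x‖) μ)
    (θ : EuclideanSpace ℝ (Fin n)) (c : ℝ)
    (H : Set (EuclideanSpace ℝ (Fin n))) (hH : H = {x | ⟪x, θ⟫ ≤ c})
    (hHpos : 0 < μ H)
    (A : Set (EuclideanSpace ℝ (Fin n))) (hA : MeasurableSet A)
    (hbar : (μ A).toReal⁻¹ * ∫ x in A, ⟪x, θ⟫ ∂μ
          = (μ H).toReal⁻¹ * ∫ x in H, ⟪x, θ⟫ ∂μ) :
    μ A ≤ μ H ∧ (μ A = μ H → μ (symmDiff H A) = 0) := by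
  have hf := integrable_inner_const_of_integrable_norm hmom θ
  have hbar' : ⨍ x in A, ⟪x, θ⟫ ∂μ = ⨍ x in H, ⟪x, θ⟫ ∂μ := by
    simpa only [setAverage_eq, measureReal_def, smul_eq_mul] using hbar
  have hHm : MeasurableSet H := hH ▸ measurableSet_le (by fun_prop) measurable_const
  have hmem : ∀ x, x ∈ H ↔ ⟪x, θ⟫ ≤ c := fun x => by rw [hH, mem_ofPred_eq]
  have hpos : ∀ x ∈ H, 0 ≤ c - ⟪x, θ⟫ := fun x hx => sub_nonneg.mpr ((hmem x).1 hx)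
  have hneg : ∀ x ∉ H, c - ⟪x, θ⟫ < 0 := fun x hx =>
    sub_neg.mpr (not_le.mp (mt (hmem x).2 hx))
  obtain ⟨hle, heq⟩ := setIntegral_le_setIntegral_of_nonneg_of_neg
    (g := fun x => c - ⟪x, θ⟫) ((integrable_const c).sub hf) hA hHm hpos hneg
  have hint (S : Set (EuclideanSpace ℝ (Fin n))) :
      ∫ x in S, (c - ⟪x, θ⟫) ∂μ = μ.real S * (c - ⨍ x in S, ⟪x, θ⟫ ∂μ) :=
    setIntegral_const_sub_eq_measureReal_mul (measure_ne_top μ S) hf.integrableOn c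
  rw [hint, hint, hbar'] at hle heq
  rcases hle.eq_or_lt with h | h
  · exact measure_le_and_symmDiff_eq_zero_of_diff_eq_zero hA (measure_ne_top μ H) (heq h)
  have hHreal : 0 < μ.real H := ENNReal.toReal_pos hHpos.ne' (measure_ne_top μ H)
  have hgap : 0 ≤ c - ⨍ x in H, ⟪x, θ⟫ ∂μ := by
    refine nonneg_of_mul_nonneg_right ?_ hHreal
    rw [← hint]
    exact setIntegral_nonneg hHm hpos
  have hlt : μ A < μ H :=
    (ENNReal.toReal_lt_toReal (measure_ne_top μ A) (measure_ne_top μ H)).mp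
      (lt_of_mul_lt_mul_right h hgap)
  exact ⟨hlt.le, fun h => absurd h hlt.ne⟩

/-- Halfspaces maximize measure among sets with the same barycenter coordinate in the
normal direction: if `H = {x : ⟪x,θ⟫ ≤ c}` with `θ` a unit vector and `μ(H) > 0`,
then for every Borel set `A` with `μ(A) > 0` and `b_{μ,θ}(A) = b_{μ,θ}(H)`, one has
`μ(A) ≤ μ(H)`, with equality only if `μ(H △ A) = 0`. -/
theorem halfspace_maximizer (n : ℕ) (μ : Measure (EuclideanSpace ℝ (Fin n)))
    [IsFiniteMeasure μ] (hac : μ ≪ volume)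
    (hmom : Integrable (fun x => ‖x‖) μ)
    (θ : EuclideanSpace ℝ (Fin n)) (hθ : ‖θ‖ = 1) (c : ℝ)
    (H : Set (EuclideanSpace ℝ (Fin n))) (hH : H = {x | ⟪x, θ⟫ ≤ c})
    (hHpos : 0 < μ H)
    (A : Set (EuclideanSpace ℝ (Fin n))) (hA : MeasurableSet A) (hApos : 0 < μ A)
    (hbar : (μ A).toReal⁻¹ * ∫ x in A, ⟪x, θ⟫ ∂μ
          = (μ H).toReal⁻¹ * ∫ x in H, ⟪x, θ⟫ ∂μ) :
    μ A ≤ μ H ∧ (μ A = μ H → μ (symmDiff H A) = 0) :=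
  halfspace_maximizer_general n μ hmom θ c H hH hHpos A hA hbar
end

section
/- Let μ be a finite absolutely continuous Borel measure on ℝ^n with bounded first moment whose support is connected. Let H_1 and H_2 be distinct hyperplanes, each containing interior points of supp(μ), with corresponding closed lower halfspaces H_1^-, H_2^-. Then b_μ(H_1^-) ≠ b_μ(H_2^-). -/
/-!
Assume `μ(H₁⁻) ≤ μ(H₂⁻)` and compare the means of `f x = ⟪x, θ₁⟫` over the two halfspaces
(bathtub principle). The sublevel set `H₁⁻ = {f ≤ c₁}` has mean at most `c₁`; passing to
`H₂⁻` removes mass where `f ≤ c₁` and puts back at least as much mass where `f > c₁`, so the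
mean strictly increases as soon as `H₂⁻ \ H₁⁻` is not null. Both `μ(H₁⁻) > 0` and the
non-nullity of `H₁⁻ Δ H₂⁻` come from a point of `H₁` in the interior of the support: it lies
in the closure of an open set on which the halfspaces differ.
-/

open MeasureTheory Set RealInnerProductSpace

/-- The support of a measure: points all of whose open neighbourhoods have positive
measure. -/
def measSupport {E : Type*} [TopologicalSpace E] [MeasurableSpace E]
    (μ : MeasureTheory.Measure E) : Set E :=
  {x | ∀ U : Set E, IsOpen U → x ∈ U → 0 < μ U}

open Filter Topology

theorem IsOpen.measure_pos_of_mem_closure {X : Type*} [TopologicalSpace X] [MeasurableSpace X]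
    {μ : Measure X} {U : Set X} {p : X} (hU : IsOpen U)
    (hp : p ∈ interior (measSupport μ)) (hpU : p ∈ closure U) : 0 < μ U := by
  obtain ⟨q, hq, hqU⟩ := mem_closure_iff.mp hpU _ isOpen_interior hp
  exact interior_subset hq U hU hqU

theorem mem_closure_of_forall_pos_add_smul_mem {E : Type*} [TopologicalSpace E]
    [AddCommGroup E] [Module ℝ E] [ContinuousAdd E] [ContinuousSMul ℝ E] {p v : E} {U : Set E}
    (h : ∀ t : ℝ, 0 < t → p + t • v ∈ U) : p ∈ closure U := by
  have hlim : Tendsto (fun t : ℝ => p + t • v) (𝓝[>] 0) (𝓝 p) := by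
    refine tendsto_nhdsWithin_of_tendsto_nhds ?_
    have hcont : Continuous fun t : ℝ => p + t • v := by fun_prop
    simpa using hcont.tendsto 0
  exact mem_closure_of_tendsto hlim (eventually_nhdsWithin_of_forall h)

section InnerProductSpace

variable {E : Type*} [NormedAddCommGroup E] [InnerProductSpace ℝ E]

theorem mem_closure_setOf_inner_lt {θ p : E} {c : ℝ} (hθ : θ ≠ 0) (hp : ⟪p, θ⟫ = c) :
    p ∈ closure {x | ⟪x, θ⟫ < c} :=
  mem_closure_of_forall_pos_add_smul_mem (v := -θ) fun t ht => by
    have hθθ := real_inner_self_pos.2 hθ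
    simp only [mem_ofPred_eq, inner_add_left, inner_smul_left, inner_neg_left, hp,
      RCLike.conj_to_real]
    nlinarith

theorem mem_closure_setOf_lt_inner {θ p : E} {c : ℝ} (hθ : θ ≠ 0) (hp : ⟪p, θ⟫ = c) :
    p ∈ closure {x | c < ⟪x, θ⟫} := by
  simpa [inner_neg_right] using
    mem_closure_setOf_inner_lt (neg_ne_zero.2 hθ) (c := -c) (by simp [inner_neg_right, hp])

theorem mem_closure_open_halfspace_sdiff_or {θ₁ θ₂ p : E} {c₁ c₂ : ℝ} (hθ₁ : ‖θ₁‖ = 1)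
    (hθ₂ : ‖θ₂‖ = 1) (hdist : {x | ⟪x, θ₁⟫ = c₁} ≠ {x | ⟪x, θ₂⟫ = c₂})
    (hp : ⟪p, θ₁⟫ = c₁) :
    p ∈ closure ({x | ⟪x, θ₁⟫ < c₁} ∩ {x | c₂ < ⟪x, θ₂⟫}) ∨
      p ∈ closure ({x | c₁ < ⟪x, θ₁⟫} ∩ {x | ⟪x, θ₂⟫ < c₂}) := by
  have hθ₁0 : θ₁ ≠ 0 := norm_ne_zero_iff.1 (by simp [hθ₁])
  rcases lt_trichotomy ⟪p, θ₂⟫ c₂ with hlt | heq | hgt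
  · exact Or.inr <| (isOpen_lt (by fun_prop) continuous_const).closure_inter
      ⟨mem_closure_setOf_lt_inner hθ₁0 hp, hlt⟩
  · have hne : θ₁ ≠ θ₂ := by
      rintro rfl
      exact hdist (by rw [← hp, heq])
    have hlt : ⟪θ₁, θ₂⟫ < 1 := (real_inner_le_one_of_norm_eq_one hθ₁ hθ₂).lt_of_ne
      (mt (inner_eq_one_iff_of_norm_eq_one hθ₁ hθ₂).1 hne)
    refine Or.inl (mem_closure_of_forall_pos_add_smul_mem (v := θ₂ - θ₁) fun t ht => ?_)
    simp only [mem_inter_iff, mem_ofPred_eq, inner_add_left, inner_smul_left, inner_sub_left,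
      real_inner_self_eq_norm_sq, hθ₁, hθ₂, hp, heq, real_inner_comm θ₁ θ₂,
      RCLike.conj_to_real]
    constructor <;> nlinarith
  · exact Or.inl <| (isOpen_lt continuous_const (by fun_prop)).closure_inter
      ⟨mem_closure_setOf_inner_lt hθ₁0 hp, hgt⟩

variable [MeasurableSpace E] {μ : Measure E}

theorem measure_halfspace_pos {θ p : E} {c : ℝ} (hθ : θ ≠ 0) (hp : ⟪p, θ⟫ = c)
    (hpμ : p ∈ interior (measSupport μ)) : 0 < μ {x | ⟪x, θ⟫ ≤ c} :=
  ((isOpen_lt (by fun_prop) continuous_const).measure_pos_of_mem_closure hpμ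
    (mem_closure_setOf_inner_lt hθ hp)).trans_le
    (measure_mono fun x (hx : ⟪x, θ⟫ < c) => hx.le)

theorem measure_halfspace_sdiff_pos {θ₁ θ₂ p : E} {c₁ c₂ : ℝ} (hθ₁ : ‖θ₁‖ = 1)
    (hθ₂ : ‖θ₂‖ = 1) (hdist : {x | ⟪x, θ₁⟫ = c₁} ≠ {x | ⟪x, θ₂⟫ = c₂})
    (hp : ⟪p, θ₁⟫ = c₁) (hpμ : p ∈ interior (measSupport μ)) :
    0 < μ ({x | ⟪x, θ₁⟫ ≤ c₁} \ {x | ⟪x, θ₂⟫ ≤ c₂}) ∨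
      0 < μ ({x | ⟪x, θ₂⟫ ≤ c₂} \ {x | ⟪x, θ₁⟫ ≤ c₁}) := by
  rcases mem_closure_open_halfspace_sdiff_or hθ₁ hθ₂ hdist hp with h | h
  · refine Or.inl (((isOpen_lt (by fun_prop) continuous_const).inter
      (isOpen_lt continuous_const (by fun_prop))).measure_pos_of_mem_closure hpμ h |>.trans_le
      (measure_mono fun x (hx : ⟪x, θ₁⟫ < c₁ ∧ c₂ < ⟪x, θ₂⟫) => ⟨hx.1.le, hx.2.not_ge⟩))
  · refine Or.inr (((isOpen_lt continuous_const (by fun_prop)).inter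
      (isOpen_lt (by fun_prop) continuous_const)).measure_pos_of_mem_closure hpμ h |>.trans_le
      (measure_mono fun x (hx : c₁ < ⟪x, θ₁⟫ ∧ ⟪x, θ₂⟫ < c₂) => ⟨hx.2.le, hx.1.not_ge⟩))

end InnerProductSpace

section SetIntegral

variable {α : Type*} [MeasurableSpace α] {μ : Measure α} {f : α → ℝ} {s : Set α} {c : ℝ}

theorem mul_measureReal_lt_setIntegral (hs : MeasurableSet s) (hμs : μ s ≠ ⊤)
    (hf : IntegrableOn f s μ) (hfs : ∀ x ∈ s, c < f x) (hs0 : μ s ≠ 0) :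
    c * μ.real s < ∫ x in s, f x ∂μ := by
  have hc : IntegrableOn (fun _ => c) s μ := integrableOn_const hμs
  have hpos : 0 < ∫ x in s, (f x - c) ∂μ := by
    refine (setIntegral_pos_iff_support_of_nonneg_ae ?_ (hf.sub hc)).2 ?_
    · exact (ae_restrict_mem hs).mono fun x hx => sub_nonneg.2 (hfs x hx).le
    · exact hs0.bot_lt.trans_le
        (measure_mono fun x hx => ⟨sub_ne_zero.2 (hfs x hx).ne', hx⟩)
  rw [integral_sub hf hc, setIntegral_const, smul_eq_mul] at hpos
  linarith

theorem setIntegral_le_mul_measureReal (hs : MeasurableSet s) (hμs : μ s ≠ ⊤)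
    (hf : IntegrableOn f s μ) (hfs : ∀ x ∈ s, f x ≤ c) :
    ∫ x in s, f x ∂μ ≤ c * μ.real s := by
  simpa [mul_comm] using setIntegral_mono_on hf (integrableOn_const hμs) hs hfs

variable [IsFiniteMeasure μ] {A B : Set α}

theorem setAverage_lt_setAverage_of_le_of_lt (hf : Integrable f μ) (hA : MeasurableSet A)
    (hB : MeasurableSet B) (hfA : ∀ x ∈ A, f x ≤ c) (hfB : ∀ x ∈ B \ A, c < f x)
    (hμA : 0 < μ A) (hAB : μ A ≤ μ B) (hsdiff : 0 < μ (A \ B) ∨ 0 < μ (B \ A)) :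
    ⨍ x in A, f x ∂μ < ⨍ x in B, f x ∂μ := by
  have hmA : 0 < μ.real A := ENNReal.toReal_pos hμA.ne' (measure_ne_top μ A)
  have hmAB : μ.real A ≤ μ.real B := ENNReal.toReal_mono (measure_ne_top μ B) hAB
  have hsplitA := measureReal_inter_add_sdiff (μ := μ) (s := A) hB
  have hsplitB := measureReal_inter_add_sdiff (μ := μ) (s := B) hA
  have hJA := integral_inter_add_sdiff hB hf.integrableOn (s := A)
  have hJB := integral_inter_add_sdiff hA hf.integrableOn (s := B)
  rw [inter_comm] at hsplitB hJB
  have hsB : 0 < μ.real (B \ A) := by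
    rcases hsdiff with h | h
    · have : 0 < μ.real (A \ B) := ENNReal.toReal_pos h.ne' (measure_ne_top μ _)
      linarith
    · exact ENNReal.toReal_pos h.ne' (measure_ne_top μ _)
  have hAB_le := setIntegral_le_mul_measureReal (hA.diff hB) (measure_ne_top μ _)
    hf.integrableOn fun x hx => hfA x hx.1
  have hBA_lt := mul_measureReal_lt_setIntegral (hB.diff hA) (measure_ne_top μ _)
    hf.integrableOn hfB ((measureReal_ne_zero_iff (measure_ne_top μ _)).1 hsB.ne')
  have hA_le := setIntegral_le_mul_measureReal hA (measure_ne_top μ _) hf.integrableOn hfA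
  have hgain : c * (μ.real B - μ.real A) < (∫ x in B, f x ∂μ) - ∫ x in A, f x ∂μ := by
    rw [← hsplitA, ← hsplitB, ← hJA, ← hJB]
    linarith
  rw [setAverage_eq, setAverage_eq, smul_eq_mul, smul_eq_mul, ← div_eq_inv_mul,
    ← div_eq_inv_mul, div_lt_div_iff₀ hmA (hmA.trans_le hmAB)]
  linarith [mul_lt_mul_of_pos_left hgain hmA,
    mul_le_mul_of_nonneg_left hA_le (sub_nonneg.2 hmAB)]

end SetIntegral

theorem inner_average {α E : Type*} [MeasurableSpace α] [NormedAddCommGroup E]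
    [InnerProductSpace ℝ E] [CompleteSpace E] {μ : Measure α} {f : α → E}
    (hf : Integrable f μ) (θ : E) : ⟪⨍ x, f x ∂μ, θ⟫ = ⨍ x, ⟪f x, θ⟫ ∂μ := by
  rw [average_eq, average_eq, real_inner_smul_left, real_inner_comm, ← integral_inner hf,
    smul_eq_mul]
  simp only [real_inner_comm θ]

theorem halfspace_barycenter_unique_general (n : ℕ)
    (μ : Measure (EuclideanSpace ℝ (Fin n)))
    [IsFiniteMeasure μ]
    (hmom : Integrable (fun x => ‖x‖) μ)
    (θ₁ θ₂ : EuclideanSpace ℝ (Fin n)) (hθ₁ : ‖θ₁‖ = 1) (hθ₂ : ‖θ₂‖ = 1)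
    (c₁ c₂ : ℝ)
    (hdist : ({x | ⟪x, θ₁⟫ = c₁} : Set (EuclideanSpace ℝ (Fin n)))
      ≠ {x | ⟪x, θ₂⟫ = c₂})
    (hint₁ : ({x | ⟪x, θ₁⟫ = c₁} ∩ interior (measSupport μ)).Nonempty)
    (hint₂ : ({x | ⟪x, θ₂⟫ = c₂} ∩ interior (measSupport μ)).Nonempty) :
    (μ {x | ⟪x, θ₁⟫ ≤ c₁}).toReal⁻¹ • (∫ x in {x | ⟪x, θ₁⟫ ≤ c₁}, x ∂μ)
      ≠ (μ {x | ⟪x, θ₂⟫ ≤ c₂}).toReal⁻¹ • (∫ x in {x | ⟪x, θ₂⟫ ≤ c₂}, x ∂μ) := by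
  wlog hle : μ {x | ⟪x, θ₁⟫ ≤ c₁} ≤ μ {x | ⟪x, θ₂⟫ ≤ c₂} generalizing θ₁ θ₂ c₁ c₂
  · exact (this θ₂ θ₁ hθ₂ hθ₁ c₂ c₁ hdist.symm hint₂ hint₁ (le_of_not_ge hle)).symm
  obtain ⟨p, hp, hpμ⟩ := hint₁
  have hθ₁0 : θ₁ ≠ 0 := norm_ne_zero_iff.1 (by simp [hθ₁])
  have hid : Integrable (fun x => x) μ := (integrable_norm_iff aestronglyMeasurable_id).1 hmom
  have hmeas (θ : EuclideanSpace ℝ (Fin n)) (c : ℝ) : MeasurableSet {x | ⟪x, θ⟫ ≤ c} :=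
    measurableSet_le (by fun_prop) measurable_const
  have hlt := setAverage_lt_setAverage_of_le_of_lt (hid.inner_const θ₁) (hmeas θ₁ c₁)
    (hmeas θ₂ c₂) (fun x hx => hx) (fun x hx => not_le.1 hx.2)
    (measure_halfspace_pos hθ₁0 hp hpμ) hle (measure_halfspace_sdiff_pos hθ₁ hθ₂ hdist hp hpμ)
  rw [← inner_average hid.integrableOn, ← inner_average hid.integrableOn, setAverage_eq,
    setAverage_eq] at hlt
  exact fun h => hlt.ne (by rw [measureReal_def, measureReal_def, h])

/-- No two distinct halfspaces, whose boundary hyperplanes meet the interior of the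
(connected) support of `μ`, share the same barycenter. -/
theorem halfspace_barycenter_unique (n : ℕ)
    (μ : Measure (EuclideanSpace ℝ (Fin n)))
    [IsFiniteMeasure μ] (hac : μ ≪ volume)
    (hmom : Integrable (fun x => ‖x‖) μ)
    (hconn : IsConnected (measSupport μ))
    (θ₁ θ₂ : EuclideanSpace ℝ (Fin n)) (hθ₁ : ‖θ₁‖ = 1) (hθ₂ : ‖θ₂‖ = 1)
    (c₁ c₂ : ℝ)
    (hdist : ({x | ⟪x, θ₁⟫ = c₁} : Set (EuclideanSpace ℝ (Fin n)))
      ≠ {x | ⟪x, θ₂⟫ = c₂})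
    (hint₁ : ({x | ⟪x, θ₁⟫ = c₁} ∩ interior (measSupport μ)).Nonempty)
    (hint₂ : ({x | ⟪x, θ₂⟫ = c₂} ∩ interior (measSupport μ)).Nonempty) :
    (μ {x | ⟪x, θ₁⟫ ≤ c₁}).toReal⁻¹ • (∫ x in {x | ⟪x, θ₁⟫ ≤ c₁}, x ∂μ)
      ≠ (μ {x | ⟪x, θ₂⟫ ≤ c₂}).toReal⁻¹ • (∫ x in {x | ⟪x, θ₂⟫ ≤ c₂}, x ∂μ) :=
  halfspace_barycenter_unique_general n μ hmom θ₁ θ₂ hθ₁ hθ₂ c₁ c₂ hdist hint₁ hint₂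
end

section
/- Let μ be a finite absolutely continuous Borel measure on ℝ^n with bounded first moment. Then for every x ≠ b_μ(ℝ^n) in the interior of the convex hull of supp(μ), there exists a halfspace H ⊆ ℝ^n with b_μ(H) = x and μ(H) = sup{μ(A) : A Borel, b_μ(A) = x}. -/
open MeasureTheory Set RealInnerProductSpace

/-!
Centre at `x` and minimize the convex function `G v = ∫ (1 + ⟪v, y - x⟫)⁺ dμ`. Since `x` is
interior to the convex hull of the support, `μ` charges every open halfspace through `x`, so `G`
grows linearly at infinity and has a minimizer `v`. As hyperplanes are `μ`-null, `G` is
differentiable at `v`, and `∇G v = 0` says that `H = {y | 0 ≤ 1 + ⟪v, y - x⟫}` has barycenter `x`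
(`v ≠ 0` because `x` is not the barycenter of `μ`); then also `μ H = G v`. Conversely, any `A`
with barycenter `x` satisfies `μ A = ∫_A (1 + ⟪v, y - x⟫) ≤ G v`: this is weak duality.
-/

open Filter Topology

theorem hasDerivAt_max_add_mul_zero {a : ℝ} (ha : a ≠ 0) (b : ℝ) :
    HasDerivAt (fun t : ℝ => max (a + t * b) 0) (if 0 ≤ a then b else 0) 0 := by
  have hline : Tendsto (fun t : ℝ => a + t * b) (𝓝 0) (𝓝 a) := by
    simpa using (by fun_prop : Continuous fun t : ℝ => a + t * b).tendsto 0
  rcases ha.lt_or_gt with hneg | hpos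
  · rw [if_neg hneg.not_ge]
    refine (hasDerivAt_const 0 (0 : ℝ)).congr_of_eventuallyEq ?_
    filter_upwards [hline.eventually (eventually_lt_nhds hneg)] with t ht
    exact max_eq_right ht.le
  · rw [if_pos hpos.le]
    refine ((hasDerivAt_mul_const b).const_add a).congr_of_eventuallyEq ?_
    filter_upwards [hline.eventually (eventually_gt_nhds hpos)] with t ht
    exact max_eq_left ht.le

theorem lipschitzWith_max_add_mul (a b : ℝ) :
    LipschitzWith (Real.nnabs b) fun t : ℝ => max (a + t * b) 0 := by
  refine (LipschitzWith.of_dist_le_mul fun s t => ?_).max_const 0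
  rw [Real.dist_eq, Real.dist_eq, Real.coe_nnabs, ← abs_mul]
  exact (congrArg abs (by ring)).le

theorem hasDerivAt_integral_max_add_mul {α : Type*} [MeasurableSpace α] {μ : Measure α}
    {f g : α → ℝ} (hf : Integrable f μ) (hg : Integrable g μ) (hf_ne : ∀ᵐ a ∂μ, f a ≠ 0) :
    HasDerivAt (fun t : ℝ => ∫ a, max (f a + t * g a) 0 ∂μ) (∫ a in {a | 0 ≤ f a}, g a ∂μ) 0 := by
  have hH : NullMeasurableSet {a | 0 ≤ f a} μ :=
    nullMeasurableSet_le aemeasurable_const hf.aemeasurable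
  rw [← integral_indicator₀ hH]
  refine (hasDerivAt_integral_of_dominated_loc_of_lip (bound := g) univ_mem ?_
    (by simpa using hf.pos_part) (hg.aestronglyMeasurable.indicator₀ hH) ?_ hg ?_).2
  · exact Eventually.of_forall fun t => (hf.add (hg.const_mul t)).pos_part.aestronglyMeasurable
  · exact Eventually.of_forall fun a => (lipschitzWith_max_add_mul (f a) (g a)).lipschitzOnWith
  · filter_upwards [hf_ne] with a ha
    simpa [indicator_apply] using hasDerivAt_max_add_mul_zero ha (g a)

theorem exists_pos_mul_norm_le_of_homogeneous {F : Type*} [NormedAddCommGroup F]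
    [NormedSpace ℝ F] [FiniteDimensional ℝ F] {h : F → ℝ} (hc : Continuous h)
    (hhom : ∀ (t : ℝ) (u : F), 0 ≤ t → h (t • u) = t * h u) (hpos : ∀ u ≠ 0, 0 < h u) :
    ∃ c > 0, ∀ u, c * ‖u‖ ≤ h u := by
  have h0 : h 0 = 0 := by simpa using hhom 0 0 le_rfl
  rcases subsingleton_or_nontrivial F with hF | hF
  · exact ⟨1, one_pos, fun u => by simp [Subsingleton.elim u 0, h0]⟩
  obtain ⟨u₀, hu₀, hmin⟩ := (isCompact_sphere (0 : F) 1).exists_isMinOn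
    (NormedSpace.sphere_nonempty.mpr zero_le_one) hc.continuousOn
  refine ⟨h u₀, hpos u₀ (ne_zero_of_mem_unit_sphere ⟨u₀, hu₀⟩), fun u => ?_⟩
  rcases eq_or_ne u 0 with rfl | hu
  · simp [h0]
  have hunit : ‖u‖⁻¹ • u ∈ Metric.sphere (0 : F) 1 := by simp [norm_smul, hu]
  calc h u₀ * ‖u‖ ≤ h (‖u‖⁻¹ • u) * ‖u‖ := by gcongr; exact hmin hunit
    _ = h u := by
      rw [hhom _ _ (by positivity)]
      field_simp

section Hinge

variable {α E : Type*} [MeasurableSpace α] {μ : Measure α} [IsFiniteMeasure μ]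
  [NormedAddCommGroup E] [InnerProductSpace ℝ E] {φ : α → E}

theorem lipschitzWith_integral_max_add_inner (hφ : Integrable φ μ) (c : ℝ) :
    LipschitzWith (Real.toNNReal (∫ a, ‖φ a‖ ∂μ)) fun v => ∫ a, max (c + ⟪v, φ a⟫) 0 ∂μ := by
  have hint : ∀ v : E, Integrable (fun a => max (c + ⟪v, φ a⟫) 0) μ := fun v =>
    ((integrable_const c).add (hφ.const_inner v)).pos_part
  refine LipschitzWith.of_dist_le_mul fun v w => ?_
  rw [dist_eq_norm, ← integral_sub (hint v) (hint w), dist_eq_norm v w,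
    Real.coe_toNNReal _ (integral_nonneg fun a => norm_nonneg (φ a)), ← integral_mul_const]
  refine norm_integral_le_of_norm_le (hφ.norm.mul_const _) (Eventually.of_forall fun a => ?_)
  calc ‖max (c + ⟪v, φ a⟫) 0 - max (c + ⟪w, φ a⟫) 0‖ ≤ |⟪v - w, φ a⟫| := by
        simpa [inner_sub_left] using abs_max_sub_max_le_abs (c + ⟪v, φ a⟫) (c + ⟪w, φ a⟫) 0
    _ ≤ ‖φ a‖ * ‖v - w‖ := (abs_real_inner_le_norm _ _).trans_eq (mul_comm _ _)

omit [IsFiniteMeasure μ] in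
theorem integral_max_inner_smul (u : E) {t : ℝ} (ht : 0 ≤ t) :
    ∫ a, max ⟪t • u, φ a⟫ 0 ∂μ = t * ∫ a, max ⟪u, φ a⟫ 0 ∂μ := by
  rw [← integral_const_mul]
  simp_rw [real_inner_smul_left, mul_max_of_nonneg _ _ ht, mul_zero]

theorem integral_max_inner_le_integral_max_one_add_inner (hφ : Integrable φ μ) (v : E) :
    ∫ a, max ⟪v, φ a⟫ 0 ∂μ ≤ ∫ a, max (1 + ⟪v, φ a⟫) 0 ∂μ :=
  integral_mono (hφ.const_inner v).pos_part ((integrable_const 1).add (hφ.const_inner v)).pos_part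
    fun a => max_le_max (by linarith) le_rfl

theorem exists_forall_integral_max_one_add_inner_le [FiniteDimensional ℝ E]
    (hφ : Integrable φ μ) (hpos : ∀ u ≠ 0, 0 < ∫ a, max ⟪u, φ a⟫ 0 ∂μ) :
    ∃ v, ∀ w, ∫ a, max (1 + ⟪v, φ a⟫) 0 ∂μ ≤ ∫ a, max (1 + ⟪w, φ a⟫) 0 ∂μ := by
  obtain ⟨c, hc, hcoer⟩ := exists_pos_mul_norm_le_of_homogeneous
    (by simpa using (lipschitzWith_integral_max_add_inner hφ 0).continuous)
    (fun t u ht => integral_max_inner_smul u ht) hpos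
  refine (lipschitzWith_integral_max_add_inner hφ 1).continuous.exists_forall_le ?_
  refine tendsto_atTop_mono (fun v => ?_) (tendsto_norm_cocompact_atTop.const_mul_atTop hc)
  exact (hcoer v).trans (integral_max_inner_le_integral_max_one_add_inner hφ v)

variable [CompleteSpace E]

theorem setIntegral_one_add_inner_of_setIntegral_eq_zero (hφ : Integrable φ μ) {A : Set α}
    (hA : ∫ a in A, φ a ∂μ = 0) (v : E) : ∫ a in A, (1 + ⟪v, φ a⟫) ∂μ = μ.real A := by
  rw [integral_add (integrable_const 1) (hφ.const_inner v).restrict, integral_inner hφ.restrict,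
    hA, inner_zero_right, add_zero, setIntegral_const, smul_eq_mul, mul_one]

theorem measureReal_le_integral_max_of_setIntegral_eq_zero (hφ : Integrable φ μ) {A : Set α}
    (hA : ∫ a in A, φ a ∂μ = 0) (v : E) : μ.real A ≤ ∫ a, max (1 + ⟪v, φ a⟫) 0 ∂μ := by
  have hint : Integrable (fun a => 1 + ⟪v, φ a⟫) μ := (integrable_const 1).add (hφ.const_inner v)
  calc μ.real A = ∫ a in A, (1 + ⟪v, φ a⟫) ∂μ :=
        (setIntegral_one_add_inner_of_setIntegral_eq_zero hφ hA v).symm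
    _ ≤ ∫ a in A, max (1 + ⟪v, φ a⟫) 0 ∂μ :=
        integral_mono hint.integrableOn hint.pos_part.integrableOn fun a => le_max_left _ _
    _ ≤ ∫ a, max (1 + ⟪v, φ a⟫) 0 ∂μ :=
        setIntegral_le_integral hint.pos_part (Eventually.of_forall fun a => le_max_right _ _)

theorem integral_max_eq_measureReal_of_setIntegral_eq_zero (hφ : Integrable φ μ) {v : E}
    (hH : ∫ a in {a | 0 ≤ 1 + ⟪v, φ a⟫}, φ a ∂μ = 0) :
    ∫ a, max (1 + ⟪v, φ a⟫) 0 ∂μ = μ.real {a | 0 ≤ 1 + ⟪v, φ a⟫} := by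
  have hint : Integrable (fun a => 1 + ⟪v, φ a⟫) μ := (integrable_const 1).add (hφ.const_inner v)
  have hmax : (fun a => max (1 + ⟪v, φ a⟫) 0) = {a | 0 ≤ 1 + ⟪v, φ a⟫}.indicator
      (fun a => 1 + ⟪v, φ a⟫) := by
    ext a
    by_cases ha : 0 ≤ 1 + ⟪v, φ a⟫
    · simp [ha]
    · simp [ha, (not_le.mp ha).le]
  rw [hmax, integral_indicator₀ (nullMeasurableSet_le aemeasurable_const hint.aemeasurable),
    setIntegral_one_add_inner_of_setIntegral_eq_zero hφ hH]

theorem measure_le_of_setIntegral_eq_zero (hφ : Integrable φ μ) {v : E}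
    (hH : ∫ a in {a | 0 ≤ 1 + ⟪v, φ a⟫}, φ a ∂μ = 0) {A : Set α} (hA : ∫ a in A, φ a ∂μ = 0) :
    μ A ≤ μ {a | 0 ≤ 1 + ⟪v, φ a⟫} := by
  rw [← ENNReal.toReal_le_toReal (measure_ne_top μ A) (measure_ne_top μ _), ← measureReal_def,
    ← measureReal_def, ← integral_max_eq_measureReal_of_setIntegral_eq_zero hφ hH]
  exact measureReal_le_integral_max_of_setIntegral_eq_zero hφ hA v

theorem setIntegral_eq_zero_of_forall_integral_max_one_add_inner_le (hφ : Integrable φ μ) {v : E}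
    (hmin : ∀ w, ∫ a, max (1 + ⟪v, φ a⟫) 0 ∂μ ≤ ∫ a, max (1 + ⟪w, φ a⟫) 0 ∂μ)
    (hne : ∀ᵐ a ∂μ, 1 + ⟪v, φ a⟫ ≠ 0) :
    ∫ a in {a | 0 ≤ 1 + ⟪v, φ a⟫}, φ a ∂μ = 0 := by
  refine integral_eq_zero_of_forall_integral_inner_eq_zero ℝ _ hφ.restrict fun w => ?_
  have hderiv := hasDerivAt_integral_max_add_mul ((integrable_const 1).add (hφ.const_inner v))
    (hφ.const_inner w) hne
  have hloc : IsLocalMin (fun t : ℝ => ∫ a, max (1 + ⟪v, φ a⟫ + t * ⟪w, φ a⟫) 0 ∂μ) 0 :=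
    Eventually.of_forall fun t => by
      simpa [inner_add_left, real_inner_smul_left, add_assoc] using hmin (v + t • w)
  exact hloc.hasDerivAt_eq_zero hderiv

theorem ne_zero_of_forall_integral_max_one_add_inner_le (hφ : Integrable φ μ) {v : E}
    (hmin : ∀ w, ∫ a, max (1 + ⟪v, φ a⟫) 0 ∂μ ≤ ∫ a, max (1 + ⟪w, φ a⟫) 0 ∂μ)
    (hφ0 : ∫ a, φ a ∂μ ≠ 0) : v ≠ 0 := by
  rintro rfl
  have hH := setIntegral_eq_zero_of_forall_integral_max_one_add_inner_le hφ hmin (by simp)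
  exact hφ0 (by simpa using hH)

end Hinge

section Geometry

variable {E : Type*} [NormedAddCommGroup E] [InnerProductSpace ℝ E]

theorem exists_inner_sub_pos_of_mem_interior_convexHull {s : Set E} {x : E}
    (hx : x ∈ interior (convexHull ℝ s)) {u : E} (hu : u ≠ 0) : ∃ z ∈ s, 0 < ⟪u, z - x⟫ := by
  by_contra! hs
  have hhull : convexHull ℝ s ⊆ {z | ⟪u, z⟫ ≤ ⟪u, x⟫} :=
    convexHull_min (fun z hz => by simpa [inner_sub_right] using hs z hz)
      (convex_halfSpace_le (innerₛₗ ℝ u).isLinear _)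
  have hmax : IsLocalMax (fun z => ⟪u, z⟫) x :=
    mem_of_superset (mem_interior_iff_mem_nhds.mp hx) hhull
  have hzero := hmax.hasFDerivAt_eq_zero (innerSL ℝ u).hasFDerivAt
  exact hu (by simpa using congr($hzero u))

theorem exists_unit_setOf_inner_le_eq {v : E} (hv : v ≠ 0) (b : ℝ) :
    ∃ (θ : E) (c : ℝ), ‖θ‖ = 1 ∧ {y | ⟪y, θ⟫ ≤ c} = {y | b ≤ ⟪v, y⟫} := by
  have hv' : 0 < ‖v‖ := norm_pos_iff.mpr hv
  refine ⟨-(‖v‖⁻¹ • v), -(‖v‖⁻¹ * b), by rw [norm_neg]; exact norm_smul_inv_norm hv, ?_⟩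
  ext y
  simp only [mem_ofPred_eq, inner_neg_right, real_inner_smul_right, neg_le_neg_iff,
    real_inner_comm v y]
  exact mul_le_mul_iff_of_pos_left (inv_pos.mpr hv')

variable [MeasurableSpace E]

theorem integral_max_inner_sub_pos [OpensMeasurableSpace E] {μ : Measure E}
    {x u z : E} (hint : Integrable (fun y => ⟪u, y - x⟫) μ) (hz : z ∈ measSupport μ)
    (hzu : 0 < ⟪u, z - x⟫) : 0 < ∫ y, max ⟪u, y - x⟫ 0 ∂μ := by
  rw [integral_pos_iff_support_of_nonneg (f := fun y => max ⟪u, y - x⟫ 0)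
    (fun y => le_max_right _ _) hint.pos_part]
  have hsupp : Function.support (fun y => max ⟪u, y - x⟫ 0) = {y | 0 < ⟪u, y - x⟫} := by
    ext y
    simp
  rw [hsupp]
  exact hz _ (isOpen_lt continuous_const (by fun_prop)) hzu

theorem integral_max_inner_sub_pos_of_mem_interior_convexHull [OpensMeasurableSpace E]
    {μ : Measure E} {x u : E} (hint : Integrable (fun y => ⟪u, y - x⟫) μ)
    (hx : x ∈ interior (convexHull ℝ (measSupport μ))) (hu : u ≠ 0) :
    0 < ∫ y, max ⟪u, y - x⟫ 0 ∂μ :=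
  let ⟨_, hz, hzu⟩ := exists_inner_sub_pos_of_mem_interior_convexHull hx hu
  integral_max_inner_sub_pos hint hz hzu

theorem ae_inner_ne [FiniteDimensional ℝ E] [BorelSpace E] (μ : Measure E)
    [μ.IsAddHaarMeasure] {v : E} (hv : v ≠ 0) (c : ℝ) : ∀ᵐ y ∂μ, ⟪v, y⟫ ≠ c := by
  have hsurj : Function.Surjective (innerₛₗ ℝ v) := fun t =>
    ⟨(t / ‖v‖ ^ 2) • v, by simp [hv]⟩
  exact (ae_comp_linearMap_mem_iff (innerₛₗ ℝ v) μ volume hsurj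
    (measurableSet_singleton c).compl).mpr (volume.ae_ne c)

theorem inv_smul_setIntegral_eq_iff [CompleteSpace E] {μ : Measure E} [IsFiniteMeasure μ]
    (hint : Integrable (fun y => y) μ) {A : Set E} (hA : μ A ≠ 0) (x : E) :
    (μ A).toReal⁻¹ • ∫ y in A, y ∂μ = x ↔ ∫ y in A, (y - x) ∂μ = 0 := by
  rw [integral_sub hint.restrict (integrable_const x), setIntegral_const, sub_eq_zero,
    measureReal_def, inv_smul_eq_iff₀ (ENNReal.toReal_ne_zero.mpr ⟨hA, measure_ne_top μ A⟩),
    eq_comm]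

end Geometry

/-- Let `μ` be a finite absolutely continuous Borel measure on `ℝⁿ` with bounded
first moment. For every `x ≠ b_μ(ℝⁿ)` in the interior of the convex hull of the
support of `μ`, there is a halfspace `H` with `b_μ(H) = x` maximizing `μ` among
all Borel sets with barycenter `x`. -/
theorem exists_maximizing_halfspace (n : ℕ)
    (μ : Measure (EuclideanSpace ℝ (Fin n)))
    [IsFiniteMeasure μ] (hac : μ ≪ volume)
    (hmom : Integrable (fun x => ‖x‖) μ)
    (x : EuclideanSpace ℝ (Fin n))
    (hx : x ∈ interior (convexHull ℝ (measSupport μ)))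
    (hxb : x ≠ (μ univ).toReal⁻¹ • (∫ y, y ∂μ)) :
    ∃ (θ : EuclideanSpace ℝ (Fin n)) (c : ℝ), ‖θ‖ = 1 ∧
      (μ {y | ⟪y, θ⟫ ≤ c}).toReal⁻¹ • (∫ y in {y | ⟪y, θ⟫ ≤ c}, y ∂μ) = x ∧
      ∀ A : Set (EuclideanSpace ℝ (Fin n)), MeasurableSet A →
        (μ A).toReal⁻¹ • (∫ y in A, y ∂μ) = x → μ A ≤ μ {y | ⟪y, θ⟫ ≤ c} := by
  have hI : Integrable (fun y => y) μ := (integrable_norm_iff aestronglyMeasurable_id).mp hmom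
  have hφ : Integrable (fun y => y - x) μ := hI.sub (integrable_const x)
  have hμ : μ univ ≠ 0 := by
    obtain ⟨z, hz⟩ := convexHull_nonempty_iff.mp ⟨x, interior_subset hx⟩
    exact (hz univ isOpen_univ (mem_univ z)).ne'
  have hpos : ∀ u ≠ 0, 0 < ∫ y, max ⟪u, y - x⟫ 0 ∂μ := fun u =>
    integral_max_inner_sub_pos_of_mem_interior_convexHull (hφ.const_inner u) hx
  obtain ⟨v, hv⟩ := exists_forall_integral_max_one_add_inner_le hφ hpos
  have hv0 : v ≠ 0 := ne_zero_of_forall_integral_max_one_add_inner_le hφ hv fun h =>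
    hxb (by simpa using ((inv_smul_setIntegral_eq_iff hI hμ x).mpr (by simpa using h)).symm)
  set H := {y | 0 ≤ 1 + ⟪v, y - x⟫}
  have hH : ∫ y in H, (y - x) ∂μ = 0 := by
    refine setIntegral_eq_zero_of_forall_integral_max_one_add_inner_le hφ hv ?_
    filter_upwards [hac.ae_le (ae_inner_ne volume hv0 (⟪v, x⟫ - 1))] with y hy
    rw [inner_sub_right]
    contrapose! hy
    linarith
  have hH0 : μ H ≠ 0 := by
    rw [← measureReal_ne_zero_iff, ← integral_max_eq_measureReal_of_setIntegral_eq_zero hφ hH]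
    exact ((hpos v hv0).trans_le (integral_max_inner_le_integral_max_one_add_inner hφ v)).ne'
  obtain ⟨θ, c, hθ, hθH⟩ := exists_unit_setOf_inner_le_eq hv0 (⟪v, x⟫ - 1)
  have hHθ : {y | ⟪y, θ⟫ ≤ c} = H := by
    rw [hθH]
    ext y
    simp only [H, mem_ofPred_eq, inner_sub_right]
    constructor <;> intro <;> linarith
  refine ⟨θ, c, hθ, by rwa [hHθ, inv_smul_setIntegral_eq_iff hI hH0], fun A _ hA => ?_⟩
  rcases eq_or_ne (μ A) 0 with hA0 | hA0
  · simp [hA0]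
  exact hHθ ▸ measure_le_of_setIntegral_eq_zero hφ hH
    ((inv_smul_setIntegral_eq_iff hI hA0 x).mp hA)
end

section
/- Let K ⊆ [-1,1]^n be a measurable set of positive volume with barycenter b(K) = (x_1,...,x_n). Then vol(K) < e^n · ∏_{i=1}^n (1 - |x_i|). -/
/-! Let `a i = 1 - |x i|` and `s i = ±1` with `s i * x i = |x i|`. The affine function
`ℓ y = ∑ i, (s i * y i - 1) / a i` is nonpositive on the cube and has average `-n` over `K`, so
Jensen's inequality gives `vol K * e⁻ⁿ ≤ ∫_K e^ℓ`. On the orthant `{y | ∀ i, s i * y i ≤ 1}` the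
function `e^ℓ` is a product of one-dimensional exponential densities of masses `a i`, and the
orthant sticks out of the cube, hence `∫_K e^ℓ < ∏ i, a i`. -/

open MeasureTheory Set

noncomputable def truncatedExp : ℝ → ℝ := (Iic 0).indicator Real.exp

lemma truncatedExp_nonneg (u : ℝ) : 0 ≤ truncatedExp u :=
  indicator_nonneg (fun _ _ => (Real.exp_pos _).le) u

lemma truncatedExp_of_nonpos {u : ℝ} (hu : u ≤ 0) : truncatedExp u = Real.exp u :=
  indicator_of_mem (mem_Iic.2 hu) _

lemma integrable_truncatedExp : Integrable truncatedExp :=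
  (integrableOn_exp_Iic 0).integrable_indicator measurableSet_Iic

lemma integral_truncatedExp : ∫ u, truncatedExp u = 1 := by
  rw [truncatedExp, integral_indicator measurableSet_Iic, integral_exp_Iic_zero]

lemma integrable_truncatedExp_comp_mul_add {c : ℝ} (hc : c ≠ 0) (d : ℝ) :
    Integrable fun t => truncatedExp (c * t + d) :=
  (integrable_truncatedExp.comp_add_right d).comp_mul_left' hc

lemma integral_truncatedExp_comp_mul_add (c d : ℝ) :
    ∫ t, truncatedExp (c * t + d) = |c|⁻¹ := by
  rw [Measure.integral_comp_mul_left (fun u => truncatedExp (u + d)),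
    integral_add_right_eq_self truncatedExp d, integral_truncatedExp, smul_eq_mul, mul_one,
    abs_inv]

section

variable {ι : Type*} [Fintype ι]

lemma convexOn_exp_sum_mul_add (c d : ι → ℝ) :
    ConvexOn ℝ univ fun y : ι → ℝ => Real.exp (∑ i, (c i * y i + d i)) := by
  let ℓ : (ι → ℝ) →ᵃ[ℝ] ℝ :=
    (∑ i, c i • LinearMap.proj (R := ℝ) (φ := fun _ : ι => ℝ) i).toAffineMap +
      AffineMap.const ℝ (ι → ℝ) (∑ i, d i)
  have hℓ : ∀ y, ℓ y = ∑ i, (c i * y i + d i) := fun y => by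
    simp [ℓ, Finset.sum_add_distrib]
  simpa [Function.comp_def, hℓ] using convexOn_exp.comp_affineMap ℓ

lemma Continuous.integrableOn_of_isBounded {E : Type*} [NormedAddCommGroup E]
    {f : (ι → ℝ) → E} (hf : Continuous f) {K : Set (ι → ℝ)} (hK : Bornology.IsBounded K) :
    IntegrableOn f K :=
  (hf.locallyIntegrable.integrableOn_isCompact hK.isCompact_closure).mono_set subset_closure

theorem volume_real_mul_exp_lt_prod_abs_inv {K : Set (ι → ℝ)} (hK : MeasurableSet K)
    (hKb : Bornology.IsBounded K) (hK0 : volume K ≠ 0) {c d : ι → ℝ} (hc : ∀ i, c i ≠ 0)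
    (hKH : ∀ y ∈ K, ∀ i, c i * y i + d i ≤ 0)
    (hgap : volume ({y | ∀ i, c i * y i + d i ≤ 0} \ K) ≠ 0) :
    volume.real K * Real.exp (∑ i, (c i * (⨍ y in K, y) i + d i)) < ∏ i, |c i|⁻¹ := by
  set g : (ι → ℝ) → ℝ := fun y => Real.exp (∑ i, (c i * y i + d i))
  set F : (ι → ℝ) → ℝ := fun y => ∏ i, truncatedExp (c i * y i + d i)
  have hFint : Integrable F := Integrable.fintype_prod fun i =>
    integrable_truncatedExp_comp_mul_add (hc i) (d i)
  have hFg : EqOn F g {y | ∀ i, c i * y i + d i ≤ 0} := fun y hy => by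
    simp only [F, g, Real.exp_sum]
    exact Finset.prod_congr rfl fun i _ => truncatedExp_of_nonpos (hy i)
  have hKfin : volume K ≠ ⊤ := hKb.measure_lt_top.ne
  have hV : 0 < volume.real K := ENNReal.toReal_pos hK0 hKfin
  have hg : Continuous g := by fun_prop
  have hjensen : g (⨍ y in K, y) ≤ ⨍ y in K, g y :=
    (convexOn_exp_sum_mul_add c d).map_set_average_le hg.continuousOn isClosed_univ hK0 hKfin
      (by simp) (continuous_id.integrableOn_of_isBounded hKb) (hg.integrableOn_of_isBounded hKb)
  have hcompl : 0 < ∫ y in Kᶜ, F y := by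
    rw [setIntegral_pos_iff_support_of_nonneg_ae
      (Filter.Eventually.of_forall fun y => Finset.prod_nonneg fun i _ => truncatedExp_nonneg _)
      hFint.integrableOn]
    refine (pos_iff_ne_zero.2 hgap).trans_le (measure_mono fun y ⟨hyH, hyK⟩ => ⟨?_, hyK⟩)
    exact (hFg hyH).trans_ne (Real.exp_pos _).ne'
  calc volume.real K * g (⨍ y in K, y) ≤ volume.real K * ⨍ y in K, g y :=
        mul_le_mul_of_nonneg_left hjensen hV.le
    _ = ∫ y in K, F y := by
      rw [setAverage_eq, smul_eq_mul, ← mul_assoc, mul_inv_cancel₀ hV.ne', one_mul]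
      exact setIntegral_congr_fun hK fun y hy => (hFg (hKH y hy)).symm
    _ < (∫ y in K, F y) + ∫ y in Kᶜ, F y := lt_add_of_pos_right _ hcompl
    _ = ∏ i, |c i|⁻¹ := by
      rw [integral_add_compl hK hFint,
        integral_fintype_prod_volume_eq_prod fun i t => truncatedExp (c i * t + d i)]
      exact Finset.prod_congr rfl fun i _ => integral_truncatedExp_comp_mul_add (c i) (d i)

lemma average_eval {α : Type*} [MeasurableSpace α] {μ : Measure α} {E : ι → Type*}
    [∀ i, NormedAddCommGroup (E i)] [∀ i, NormedSpace ℝ (E i)] [∀ i, CompleteSpace (E i)]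
    {f : α → ∀ i, E i} (hf : Integrable f μ) (i : ι) :
    (⨍ x, f x ∂μ) i = ⨍ x, f x i ∂μ := by
  rw [average_eq, average_eq, Pi.smul_apply, eval_integral hf.eval]

lemma abs_setAverage_eval_lt {K : Set (ι → ℝ)} (hK : MeasurableSet K) (hK0 : volume K ≠ 0)
    {i : ι} {C : ℝ} (hC : ∀ y ∈ K, |y i| ≤ C) :
    |⨍ y in K, y i| < C := by
  -- By strict convexity, otherwise `y i` is a.e. constant on `K`, putting `K` in a null hyperplane.
  refine (ae_eq_const_or_norm_average_lt_of_norm_le_const (f := fun y : ι → ℝ => y i)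
    (ae_restrict_of_forall_mem hK hC)).resolve_left fun hconst => hK0 ?_
  have hnull : ∀ᵐ y ∂volume.restrict K, False :=
    (hconst.and (ae_restrict_of_ae (Measure.ae_eval_ne _ i _))).mono fun _ h => h.2 h.1
  rw [← Measure.restrict_eq_zero, ← ae_eq_bot, ← Filter.eventually_false_iff_eq_bot]
  exact hnull

lemma abs_setAverage_apply_lt_one {K : Set (ι → ℝ)} (hK : MeasurableSet K)
    (hKsub : K ⊆ Icc (-1) 1) (hK0 : volume K ≠ 0) (i : ι) :
    |(⨍ y in K, y) i| < 1 := by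
  rw [average_eval (Continuous.integrableOn_of_isBounded (f := fun y : ι → ℝ => y)
    continuous_id (Metric.isBounded_Icc _ _ |>.subset hKsub))]
  exact abs_setAverage_eval_lt hK hK0 fun y hy => abs_le.2 ⟨(hKsub hy).1 i, (hKsub hy).2 i⟩

lemma volume_setOf_forall_mul_lt_ne_zero {c : ι → ℝ} (hc : ∀ i, c i ≠ 0) (r : ι → ℝ) :
    volume {y : ι → ℝ | ∀ i, c i * y i < r i} ≠ 0 := by
  have hU : IsOpen {y : ι → ℝ | ∀ i, c i * y i < r i} := by
    rw [ofPred_forall]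
    exact isOpen_iInter_of_finite fun i => isOpen_lt (by fun_prop) continuous_const
  refine (hU.measure_pos volume ⟨fun i => (r i - 1) / c i, fun i => ?_⟩).ne'
  rw [mul_div_cancel₀ _ (hc i)]
  linarith

theorem volume_real_mul_exp_lt_prod_of_subset_Icc [Nonempty ι] {K : Set (ι → ℝ)}
    (hK : MeasurableSet K) (hKsub : K ⊆ Icc (-1) 1) (hK0 : volume K ≠ 0)
    {s a : ι → ℝ} (hs : ∀ i, |s i| = 1) (ha : ∀ i, 0 < a i) :
    volume.real K * Real.exp (∑ i, (s i * (⨍ y in K, y) i - 1) / a i) < ∏ i, a i := by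
  have hs0 : ∀ i, s i ≠ 0 := fun i => abs_ne_zero.1 ((hs i).trans_ne one_ne_zero)
  have hsy : ∀ y ∈ K, ∀ i, |s i * y i| ≤ 1 := fun y hy i => by
    rw [abs_mul, hs, one_mul]; exact abs_le.2 ⟨(hKsub hy).1 i, (hKsub hy).2 i⟩
  have hℓ : ∀ i t, s i / a i * t + -(a i)⁻¹ = (s i * t - 1) / a i := fun i t => by ring
  have hH : ∀ y : ι → ℝ, (∀ i, s i * y i ≤ 1) → ∀ i, s i / a i * y i + -(a i)⁻¹ ≤ 0 :=
    fun y hy i => by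
      rw [hℓ]; exact div_nonpos_of_nonpos_of_nonneg (sub_nonpos.2 (hy i)) (ha i).le
  have hU : {y : ι → ℝ | ∀ i, s i * y i < -1} ⊆ {y | ∀ i, s i / a i * y i + -(a i)⁻¹ ≤ 0} \ K :=
    fun y hy => ⟨hH y fun i => by linarith [hy i], fun hyK => by
      obtain ⟨i⟩ := ‹Nonempty ι›
      linarith [hy i, (abs_le.1 (hsy y hyK i)).1]⟩
  have key := volume_real_mul_exp_lt_prod_abs_inv hK (Metric.isBounded_Icc _ _ |>.subset hKsub)
    hK0 (fun i => div_ne_zero (hs0 i) (ha i).ne')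
    (fun y hy => hH y fun i => (abs_le.1 (hsy y hy i)).2)
    fun h0 => volume_setOf_forall_mul_lt_ne_zero hs0 _ (measure_mono_null hU h0)
  have hprod : ∏ i, |s i / a i|⁻¹ = ∏ i, a i := Finset.prod_congr rfl fun i _ => by
    rw [abs_div, hs, abs_of_pos (ha i), one_div, inv_inv]
  simpa only [hℓ, hprod] using key

end

lemma exists_abs_eq_one_mul_eq_abs (r : ℝ) : ∃ σ : ℝ, |σ| = 1 ∧ σ * r = |r| := by
  rcases abs_cases r with ⟨h, -⟩ | ⟨h, -⟩
  exacts [⟨1, abs_one, by rw [h, one_mul]⟩, ⟨-1, by simp, by rw [h, neg_one_mul]⟩]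

/-- For a measurable set `K ⊆ [-1,1]^n` of positive volume with barycenter
`(x₁,…,xₙ)`, one has `vol(K) < eⁿ ∏ᵢ (1 - |xᵢ|)`. -/
theorem isobarycentric_general_bound (n : ℕ) (hn : 0 < n)
    (K : Set (Fin n → ℝ)) (hK : MeasurableSet K)
    (hKsub : K ⊆ Icc (fun _ => -1 : Fin n → ℝ) (fun _ => 1))
    (hKpos : 0 < volume K) (x : Fin n → ℝ)
    (hbar : (volume K).toReal⁻¹ • (∫ y in K, y) = x) :
    (volume K).toReal < Real.exp 1 ^ n * ∏ i, (1 - |x i|) := by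
  have : Nonempty (Fin n) := ⟨⟨0, hn⟩⟩
  have havg : ⨍ y in K, y = x := by rwa [setAverage_eq, measureReal_def]
  have ha : ∀ i, 0 < 1 - |x i| := fun i =>
    sub_pos.2 (by simpa only [havg] using abs_setAverage_apply_lt_one hK hKsub hKpos.ne' i)
  choose s hs hsx using fun i => exists_abs_eq_one_mul_eq_abs (x i)
  have hsum : ∑ i, (s i * (⨍ y in K, y) i - 1) / (1 - |x i|) = -n := by
    calc _ = ∑ _i : Fin n, (-1 : ℝ) := Finset.sum_congr rfl fun i _ => by
            rw [havg, hsx, ← neg_sub, neg_div, div_self (ha i).ne']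
      _ = -n := by simp
  have key := volume_real_mul_exp_lt_prod_of_subset_Icc hK hKsub hKpos.ne' hs ha
  rw [hsum] at key
  rw [Real.exp_one_pow, ← measureReal_def]
  calc volume.real K = Real.exp n * (volume.real K * Real.exp (-n)) := by
        rw [mul_left_comm, ← Real.exp_add, add_neg_cancel, Real.exp_zero, mul_one]
    _ < Real.exp n * ∏ i, (1 - |x i|) := by gcongr
end
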